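/- arXiv:1305.4849 — 4 statements merged into one kernel-verified Lean document; each statement's English description precedes it below -/
import Mathlib

section
/- Let K ∈ ℝ, N ∈ [1,∞), let (X,d,m) be a CD*(K,N) metric measure space having the good transport property (GT), let mu_0 = rho_0*m and mu_1 = rho_1*m be in P2(X), both absolutely continuous with respect to m, and let pi ∈ OptGeo(mu_0,mu_1) be the unique optimal geodesic plan from mu_0 to mu_1. Then (e_t)#pi << m for every t ∈ [0,1]. -/
open MeasureTheory Metric Set unitInterval ENNReal NNReal

noncomputable section

variable {X : Type*} [MetricSpace X]

/-- A constant speed minimizing geodesic parametrized on `[0,1]`. -/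
def IsUnitGeodesic (γ : C(unitInterval, X)) : Prop :=
  ∀ s t : unitInterval, dist (γ s) (γ t) = |(s : ℝ) - (t : ℝ)| * dist (γ 0) (γ 1)

/-- The space of constant speed minimizing geodesics, with the sup distance. -/
def Geo (X : Type*) [MetricSpace X] : Type _ :=
  { γ : C(unitInterval, X) // IsUnitGeodesic γ }

instance : MetricSpace (Geo X) := Subtype.metricSpace
instance : MeasurableSpace (Geo X) := borel _
instance : BorelSpace (Geo X) := ⟨rfl⟩

/-- Evaluation map `e_t`. -/
def eval (t : unitInterval) (γ : Geo X) : X := γ.1 t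

/-- `(X,d)` is a geodesic space: any two points are joined by a geodesic. -/
def IsGeodesicSpace (X : Type*) [MetricSpace X] : Prop :=
  ∀ x y : X, ∃ γ : Geo X, eval 0 γ = x ∧ eval 1 γ = y

/-- The (topological) support of a measure. -/
def measSupport {Y : Type*} [TopologicalSpace Y] [MeasurableSpace Y] (μ : Measure Y) : Set Y :=
  {y | ∀ U ∈ nhds y, 0 < μ U}

variable [MeasurableSpace X]

/-- Finite second moment. -/
def HasFiniteSecondMoment (μ : Measure X) : Prop :=
  ∃ x₀ : X, ∫⁻ x, ENNReal.ofReal (dist x x₀ ^ 2) ∂μ ≠ ⊤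

/-- The transport cost of a plan on the space of geodesics. -/
def transportCost (π : Measure (Geo X)) : ℝ≥0∞ :=
  ∫⁻ γ, ENNReal.ofReal (dist (eval 0 γ) (eval 1 γ) ^ 2) ∂π

/-- `π ∈ OptGeo(μ,ν)`: an optimal geodesic plan from `μ` to `ν`. -/
def IsOptGeo (μ ν : Measure X) (π : Measure (Geo X)) : Prop :=
  IsProbabilityMeasure π ∧ π.map (eval 0) = μ ∧ π.map (eval 1) = ν ∧
    ∀ π' : Measure (Geo X), IsProbabilityMeasure π' →
      π'.map (eval 0) = μ → π'.map (eval 1) = ν →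
      transportCost π ≤ transportCost π'

/-- The distortion coefficients `σ_{K,N}^{(t)}(θ)`. -/
def sigmaCoeff (K N t θ : ℝ) : ℝ≥0∞ :=
  if N * Real.pi ^ 2 ≤ K * θ ^ 2 then ⊤
  else if 0 < K * θ ^ 2 then
    ENNReal.ofReal (Real.sin (t * θ * Real.sqrt (K / N)) / Real.sin (θ * Real.sqrt (K / N)))
  else if K * θ ^ 2 = 0 then ENNReal.ofReal t
  else ENNReal.ofReal (Real.sinh (t * θ * Real.sqrt (-K / N)) / Real.sinh (θ * Real.sqrt (-K / N)))

/-- The distortion coefficients `τ_{K,N}^{(t)}(θ)`. -/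
def tauCoeff (K N t θ : ℝ) : ℝ≥0∞ :=
  if N = 1 then
    (if K ≤ 0 then ENNReal.ofReal t else if θ = 0 then ENNReal.ofReal t else ⊤)
  else ENNReal.ofReal t ^ (1 / N) * sigmaCoeff K (N - 1) t θ ^ ((N - 1) / N)

/-- The (reduced) curvature dimension condition `CD*(K,N)`. -/
def IsCDStar (K N : ℝ) (m : Measure X) : Prop :=
  ∀ μ₀ μ₁ : Measure X, IsProbabilityMeasure μ₀ → IsProbabilityMeasure μ₁ →
    (∃ s : Set X, Bornology.IsBounded s ∧ μ₀ sᶜ = 0 ∧ μ₁ sᶜ = 0) →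
    ∃ π : Measure (Geo X), IsOptGeo μ₀ μ₁ π ∧
      ∀ t : unitInterval, ∀ N' : ℝ, N ≤ N' →
        ∫⁻ γ, (sigmaCoeff K N' (1 - (t : ℝ)) (dist (eval 0 γ) (eval 1 γ)) *
                 ((π.map (eval 0)).rnDeriv m (eval 0 γ)) ^ (-(1 / N')) +
               sigmaCoeff K N' (t : ℝ) (dist (eval 0 γ) (eval 1 γ)) *
                 ((π.map (eval 1)).rnDeriv m (eval 1 γ)) ^ (-(1 / N'))) ∂π
          ≤ ∫⁻ x, ((π.map (eval t)).rnDeriv m x) ^ (1 - 1 / N') ∂m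

/-- The good transport property (GT): between absolutely continuous measures in `P₂(X)` there is
a unique optimal geodesic plan, and it is induced by a map from every intermediate time. -/
def GoodTransport (m : Measure X) : Prop :=
  ∀ μ ν : Measure X, IsProbabilityMeasure μ → IsProbabilityMeasure ν →
    HasFiniteSecondMoment μ → HasFiniteSecondMoment ν → μ ≪ m → ν ≪ m →
    (∃! π : Measure (Geo X), IsOptGeo μ ν π) ∧
    ∀ π : Measure (Geo X), IsOptGeo μ ν π → ∀ t : unitInterval,
      ∃ T : X → Geo X, Measurable T ∧ π = (π.map (eval t)).map T

/-- `c`-concavity (with `c = d²/2`) for functions with values in `ℝ ∪ {-∞}`. -/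
def cConcave (φ : X → EReal) : Prop :=
  (∃ x, φ x ≠ ⊥) ∧ (∀ x, φ x ≠ ⊤) ∧
    ∃ ψ : X → EReal, (∀ y, ψ y ≠ ⊤) ∧
      ∀ x, φ x = ⨅ y, ((dist x y ^ 2 / 2 : ℝ) : EReal) - ψ y

/-- The `c`-transform `φᶜ`. -/
def cTransform (φ : X → EReal) : X → EReal :=
  fun y => ⨅ x, ((dist x y ^ 2 / 2 : ℝ) : EReal) - φ x

/-- The `c`-superdifferential `∂ᶜφ`. -/
def cSuperdiff (φ : X → EReal) : Set (X × X) :=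
  {p | φ p.1 + cTransform φ p.2 = ((dist p.1 p.2 ^ 2 / 2 : ℝ) : EReal)}

/-- Kantorovich potential from `μ` to `ν`. -/
def IsKantorovichPotential (μ ν : Measure X) (φ : X → EReal) : Prop :=
  cConcave φ ∧ ∀ π : Measure (Geo X), IsOptGeo μ ν π →
    measSupport (π.map (fun γ => (eval 0 γ, eval 1 γ))) ⊆ cSuperdiff φ


/-! ### Auxiliary lemmas -/

section AuxHelpers

lemma continuous_eval' (t : unitInterval) : Continuous (eval (X := X) t) := by
  have h : (eval (X := X) t) = (fun f : C(unitInterval, X) => f t) ∘ (Subtype.val) := rfl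
  rw [h]
  exact (continuous_eval_const t).comp continuous_subtype_val

variable [MeasurableSpace X] [BorelSpace X]

lemma measurable_eval' (t : unitInterval) : Measurable (eval (X := X) t) :=
  (continuous_eval' t).measurable

omit [MeasurableSpace X] [BorelSpace X] in
lemma dist_eval_le' (γ : Geo X) (t : unitInterval) :
    dist (eval t γ) (eval 0 γ) ≤ dist (eval 0 γ) (eval 1 γ) := by
  have h := γ.2 t 0
  have ht : |(t : ℝ) - ((0 : unitInterval) : ℝ)| ≤ 1 := by
    rw [abs_of_nonneg (by simpa using t.2.1)]
    simpa using t.2.2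
  calc dist (eval t γ) (eval 0 γ)
      = |(t : ℝ) - ((0 : unitInterval) : ℝ)| * dist (eval 0 γ) (eval 1 γ) := h
    _ ≤ 1 * dist (eval 0 γ) (eval 1 γ) := mul_le_mul_of_nonneg_right ht dist_nonneg
    _ = _ := one_mul _

end AuxHelpers

lemma rpow_neg_anti' {x y : ℝ≥0∞} (h : x ≤ y) {r : ℝ} (hr : 0 ≤ r) : y ^ (-r) ≤ x ^ (-r) := by
  rw [ENNReal.rpow_neg, ENNReal.rpow_neg]
  exact ENNReal.inv_le_inv.2 (ENNReal.rpow_le_rpow h hr)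

lemma rpow_le_eps' {ρ ε : ℝ≥0∞} {a : ℝ} (hε0 : ε ≠ 0) (hεt : ε ≠ ⊤) (ha0 : 0 < a) (ha1 : a ≤ 1) :
    ρ ^ a ≤ ε ^ a + ε ^ (a - 1) * ρ := by
  rcases le_total ρ ε with h | h
  · exact (ENNReal.rpow_le_rpow h ha0.le).trans le_self_add
  · have hne : ε ^ (a - 1) ≠ 0 := (ENNReal.rpow_pos (zero_lt_iff.mpr hε0) hεt).ne'
    rcases eq_or_ne ρ ⊤ with rfl | hρt
    · rw [ENNReal.top_rpow_of_pos ha0, ENNReal.mul_top hne]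
      exact le_add_self.trans_eq rfl
    · have hρ0 : ρ ≠ 0 := by
        intro h0; rw [h0, le_zero_iff] at h; exact hε0 h
      have h1 : ρ ^ a = ρ ^ (a - 1) * ρ := by
        have ha : a = (a - 1) + 1 := by ring
        rw [ha, ENNReal.rpow_add _ _ hρ0 hρt, ENNReal.rpow_one]
        ring_nf
      have h2 : ρ ^ (a - 1) ≤ ε ^ (a - 1) := by
        have hh : a - 1 = -(1 - a) := by ring
        rw [hh]
        exact rpow_neg_anti' h (by linarith)
      calc ρ ^ a = ρ ^ (a - 1) * ρ := h1
        _ ≤ ε ^ (a - 1) * ρ := mul_le_mul_left h2 ρ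
        _ ≤ _ := le_add_self

lemma sigmaCoeff_lower (K : ℝ) {N' s θ R : ℝ} (hN' : 1 ≤ N')
    (hs0 : 0 ≤ s) (hs1 : s ≤ 1) (hθ0 : 0 ≤ θ) (hθR : θ ≤ R)
    (hcond : K * R ^ 2 < N' * Real.pi ^ 2) :
    ENNReal.ofReal (s * Real.exp (-(R * Real.sqrt (|K| / N')))) ≤ sigmaCoeff K N' s θ := by
  have hN'0 : (0:ℝ) < N' := lt_of_lt_of_le one_pos hN'
  have hR0 : 0 ≤ R := hθ0.trans hθR
  set β := Real.exp (-(R * Real.sqrt (|K| / N'))) with hβ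
  have hβ0 : 0 < β := Real.exp_pos _
  have hβ1 : β ≤ 1 := by
    rw [hβ, Real.exp_le_one_iff]
    have : 0 ≤ R * Real.sqrt (|K| / N') := mul_nonneg hR0 (Real.sqrt_nonneg _)
    linarith
  have hbranch1 : ¬ (N' * Real.pi ^ 2 ≤ K * θ ^ 2) := by
    push_neg
    rcases le_or_gt 0 K with hK | hK
    · calc K * θ ^ 2 ≤ K * R ^ 2 := mul_le_mul_of_nonneg_left (by nlinarith) hK
        _ < N' * Real.pi ^ 2 := hcond
    · have h1 : K * θ ^ 2 ≤ 0 := mul_nonpos_of_nonpos_of_nonneg hK.le (sq_nonneg θ)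
      have hπ : 0 < N' * Real.pi ^ 2 := by positivity
      linarith
  rw [sigmaCoeff, if_neg hbranch1]
  by_cases h2 : 0 < K * θ ^ 2
  · rw [if_pos h2]
    have hK : 0 < K := by
      by_contra hK
      push_neg at hK
      nlinarith [sq_nonneg θ]
    have hθpos : 0 < θ := by
      rcases hθ0.lt_or_eq with h | h
      · exact h
      · exfalso; rw [← h] at h2; simp at h2
    set u := θ * Real.sqrt (K / N') with hu
    have hu0 : 0 < u := mul_pos hθpos (Real.sqrt_pos.2 (div_pos hK hN'0))
    have hu2 : u ^ 2 = θ ^ 2 * (K / N') := by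
      rw [hu, mul_pow, Real.sq_sqrt (div_nonneg hK.le hN'0.le)]
    have huπ : u < Real.pi := by
      have h1 : u ^ 2 < Real.pi ^ 2 := by
        rw [hu2]
        have hθ2 : θ ^ 2 * (K / N') ≤ R ^ 2 * (K / N') := by
          apply mul_le_mul_of_nonneg_right (by nlinarith) (by positivity)
        have heq : R ^ 2 * (K / N') = K * R ^ 2 / N' := by ring
        have h2' : K * R ^ 2 / N' < Real.pi ^ 2 := (div_lt_iff₀ hN'0).mpr (by nlinarith)
        linarith [heq ▸ hθ2]
      exact lt_of_pow_lt_pow_left₀ 2 Real.pi_pos.le h1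
    have hsinu : 0 < Real.sin u := Real.sin_pos_of_pos_of_lt_pi hu0 huπ
    have hconc : s * Real.sin u ≤ Real.sin (s * u) := by
      have hc := strictConcaveOn_sin_Icc.concaveOn
      have h0m : (0:ℝ) ∈ Icc 0 Real.pi := ⟨le_refl _, Real.pi_pos.le⟩
      have hum : u ∈ Icc 0 Real.pi := ⟨hu0.le, huπ.le⟩
      have := hc.2 h0m hum (by linarith : (0:ℝ) ≤ 1 - s) hs0 (by ring)
      simpa [smul_eq_mul] using this
    apply ENNReal.ofReal_le_ofReal
    have hgoal : s * β ≤ Real.sin (s * u) / Real.sin u := by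
      rw [le_div_iff₀ hsinu]
      calc s * β * Real.sin u ≤ s * 1 * Real.sin u := by
            apply mul_le_mul_of_nonneg_right ?_ hsinu.le
            exact mul_le_mul_of_nonneg_left hβ1 hs0
        _ = s * Real.sin u := by ring
        _ ≤ Real.sin (s * u) := hconc
    calc s * β ≤ Real.sin (s * u) / Real.sin u := hgoal
      _ = Real.sin (s * θ * Real.sqrt (K / N')) / Real.sin (θ * Real.sqrt (K / N')) := by
          rw [hu]; ring_nf
  · rw [if_neg h2]
    by_cases h3 : K * θ ^ 2 = 0
    · rw [if_pos h3]
      apply ENNReal.ofReal_le_ofReal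
      nlinarith
    · rw [if_neg h3]
      push_neg at h2
      have hKθ : K * θ ^ 2 < 0 := lt_of_le_of_ne h2 h3
      have hθpos : 0 < θ := by
        rcases hθ0.lt_or_eq with h | h
        · exact h
        · exfalso; rw [← h] at hKθ; simp at hKθ
      have hK : K < 0 := by nlinarith [sq_nonneg θ]
      set u := θ * Real.sqrt (-K / N') with hu
      have hu0 : 0 < u := mul_pos hθpos (Real.sqrt_pos.2 (div_pos (by linarith) hN'0))
      have hsinhu : 0 < Real.sinh u := Real.sinh_pos_iff.2 hu0
      have hsinh_le : Real.sinh u ≤ u * Real.exp u := by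
        have key : 1 - Real.exp (-(2*u)) ≤ 2*u := by
          have := Real.add_one_le_exp (-(2*u))
          linarith
        have hid : Real.exp u - Real.exp (-u) = Real.exp u * (1 - Real.exp (-(2*u))) := by
          rw [mul_sub, mul_one, ← Real.exp_add]
          ring_nf
        rw [Real.sinh_eq, hid]
        have e0 := Real.exp_pos u
        nlinarith
      have hsu : s * u ≤ Real.sinh (s * u) := by
        rcases (mul_nonneg hs0 hu0.le).lt_or_eq with h | h
        · exact (Real.self_lt_sinh_iff.mpr h).le
        · rw [← h]; simp
      apply ENNReal.ofReal_le_ofReal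
      have hgoal : s * Real.exp (-u) ≤ Real.sinh (s * u) / Real.sinh u := by
        rw [le_div_iff₀ hsinhu]
        calc s * Real.exp (-u) * Real.sinh u
            ≤ s * Real.exp (-u) * (u * Real.exp u) := by
              apply mul_le_mul_of_nonneg_left hsinh_le
              positivity
          _ = s * u * (Real.exp (-u) * Real.exp u) := by ring
          _ = s * u := by rw [← Real.exp_add]; simp
          _ ≤ Real.sinh (s * u) := hsu
      have huR : u ≤ R * Real.sqrt (|K| / N') := by
        rw [hu, abs_of_neg hK]
        exact mul_le_mul_of_nonneg_right hθR (Real.sqrt_nonneg _)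
      have hβu : β ≤ Real.exp (-u) := by
        rw [hβ]
        exact Real.exp_le_exp.2 (by linarith)
      calc s * β ≤ s * Real.exp (-u) := mul_le_mul_of_nonneg_left hβu hs0
        _ ≤ Real.sinh (s * u) / Real.sinh u := hgoal
        _ = Real.sinh (s * θ * Real.sqrt (-K / N')) / Real.sinh (θ * Real.sqrt (-K / N')) := by
            rw [hu]; ring_nf

section MeasureHelpers

variable [MeasurableSpace X] [BorelSpace X]

lemma secondMoment_mul_ne_top {μ : Measure X} {y : X}
    (h : ∫⁻ x, ENNReal.ofReal (dist x y ^ 2) ∂μ ≠ ⊤) :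
    ∫⁻ x, ENNReal.ofReal (2 * dist x y ^ 2) ∂μ ≠ ⊤ := by
  have h1 : ∀ x, ENNReal.ofReal (2 * dist x y ^ 2) = 2 * ENNReal.ofReal (dist x y ^ 2) := by
    intro x
    rw [ENNReal.ofReal_mul (by norm_num : (0:ℝ) ≤ 2)]
    norm_num
  simp only [h1]
  rw [lintegral_const_mul' _ _ (by norm_num : (2:ℝ≥0∞) ≠ ⊤)]
  exact ENNReal.mul_ne_top (by norm_num) h

lemma secondMoment_of {μ : Measure X} [IsFiniteMeasure μ] (h : HasFiniteSecondMoment μ) (y : X) :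
    ∫⁻ x, ENNReal.ofReal (dist x y ^ 2) ∂μ ≠ ⊤ := by
  obtain ⟨x₀, hx₀⟩ := h
  have hpt : ∀ x, ENNReal.ofReal (dist x y ^ 2) ≤
      ENNReal.ofReal (2 * dist x x₀ ^ 2) + ENNReal.ofReal (2 * dist x₀ y ^ 2) := by
    intro x
    rw [← ENNReal.ofReal_add (by positivity) (by positivity)]
    apply ENNReal.ofReal_le_ofReal
    have htri := dist_triangle x x₀ y
    nlinarith [dist_nonneg (x := x) (y := x₀), dist_nonneg (x := x₀) (y := y),
      dist_nonneg (x := x) (y := y), sq_nonneg (dist x x₀ - dist x₀ y)]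
  apply ne_top_of_le_ne_top ?_ (lintegral_mono hpt)
  rw [lintegral_add_right _ measurable_const, lintegral_const]
  exact ENNReal.add_ne_top.2 ⟨secondMoment_mul_ne_top hx₀,
    ENNReal.mul_ne_top ENNReal.ofReal_ne_top (measure_ne_top μ _)⟩

lemma transportCost_ne_top' {μ₀ μ₁ : Measure X} {π : Measure (Geo X)}
    (h0 : π.map (eval 0) = μ₀) (h1 : π.map (eval 1) = μ₁)
    (hμ₀p : IsProbabilityMeasure μ₀) (hμ₁p : IsProbabilityMeasure μ₁)
    (hμ₀2 : HasFiniteSecondMoment μ₀) (hμ₁2 : HasFiniteSecondMoment μ₁) :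
    transportCost π ≠ ⊤ := by
  haveI := hμ₀p; haveI := hμ₁p
  obtain ⟨x₀, -⟩ := id hμ₀2
  have h2 : ∫⁻ x, ENNReal.ofReal (dist x x₀ ^ 2) ∂μ₀ ≠ ⊤ := secondMoment_of hμ₀2 x₀
  have h3 : ∫⁻ x, ENNReal.ofReal (dist x x₀ ^ 2) ∂μ₁ ≠ ⊤ := secondMoment_of hμ₁2 x₀
  set f : X → ℝ≥0∞ := fun x => ENNReal.ofReal (2 * dist x x₀ ^ 2) with hf
  have hfm : Measurable f :=
    ((continuous_const.mul ((continuous_id.dist continuous_const).pow 2)).measurable).ennreal_ofReal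
  have hpt : ∀ γ : Geo X, ENNReal.ofReal (dist (eval 0 γ) (eval 1 γ) ^ 2) ≤
      f (eval 0 γ) + f (eval 1 γ) := by
    intro γ
    rw [hf, ← ENNReal.ofReal_add (by positivity) (by positivity)]
    apply ENNReal.ofReal_le_ofReal
    have htri := dist_triangle_right (eval 0 γ) (eval 1 γ) x₀
    nlinarith [dist_nonneg (x := eval 0 γ) (y := x₀), dist_nonneg (x := eval 1 γ) (y := x₀),
      dist_nonneg (x := eval 0 γ) (y := eval 1 γ),
      sq_nonneg (dist (eval 0 γ) x₀ - dist (eval 1 γ) x₀)]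
  apply ne_top_of_le_ne_top ?_ (lintegral_mono hpt)
  rw [lintegral_add_left (show Measurable fun γ : Geo X => f (eval 0 γ) from hfm.comp (measurable_eval' 0))]
  rw [← lintegral_map hfm (measurable_eval' 0), ← lintegral_map hfm (measurable_eval' 1), h0, h1]
  exact ENNReal.add_ne_top.2 ⟨secondMoment_mul_ne_top h2, secondMoment_mul_ne_top h3⟩

lemma isOptGeo_restrict {μ₀ μ₁ : Measure X} {π : Measure (Geo X)} (hπ : IsOptGeo μ₀ μ₁ π)
    (hcost : transportCost π ≠ ⊤) {F : Set (Geo X)} (hF : MeasurableSet F) (hF0 : π F ≠ 0) :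
    IsOptGeo (((π F)⁻¹ • π.restrict F).map (eval 0)) (((π F)⁻¹ • π.restrict F).map (eval 1))
      ((π F)⁻¹ • π.restrict F) := by
  haveI := hπ.1
  have hFt : π F ≠ ⊤ := measure_ne_top π F
  have hinv : (π F)⁻¹ * π F = 1 := ENNReal.inv_mul_cancel hF0 hFt
  have hinv' : π F * (π F)⁻¹ = 1 := ENNReal.mul_inv_cancel hF0 hFt
  have hprob : IsProbabilityMeasure ((π F)⁻¹ • π.restrict F) := by
    constructor
    rw [Measure.smul_apply, smul_eq_mul, Measure.restrict_apply_univ]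
    exact hinv
  refine ⟨hprob, rfl, rfl, ?_⟩
  intro π'' hp'' h0'' h1''
  have hev0 := measurable_eval' (X := X) 0
  have hev1 := measurable_eval' (X := X) 1
  set πn : Measure (Geo X) := (π F) • π'' + π.restrict Fᶜ with hπn
  have hπnp : IsProbabilityMeasure πn := by
    constructor
    rw [hπn, Measure.add_apply, Measure.smul_apply, smul_eq_mul, hp''.measure_univ, mul_one,
      Measure.restrict_apply_univ, measure_add_measure_compl hF, measure_univ]
  have hmarg0 : πn.map (eval 0) = μ₀ := by
    rw [hπn, Measure.map_add _ _ hev0, Measure.map_smul, h0'', Measure.map_smul, smul_smul,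
      hinv', one_smul, ← Measure.map_add _ _ hev0, Measure.restrict_add_restrict_compl hF,
      hπ.2.1]
  have hmarg1 : πn.map (eval 1) = μ₁ := by
    rw [hπn, Measure.map_add _ _ hev1, Measure.map_smul, h1'', Measure.map_smul, smul_smul,
      hinv', one_smul, ← Measure.map_add _ _ hev1, Measure.restrict_add_restrict_compl hF,
      hπ.2.2.1]
  have hsplit : transportCost (π.restrict F) + transportCost (π.restrict Fᶜ) = transportCost π :=
    lintegral_add_compl _ hF
  have hrtop : transportCost (π.restrict Fᶜ) ≠ ⊤ :=
    ne_top_of_le_ne_top hcost (setLIntegral_le_lintegral _ _)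
  have hπncost : transportCost πn = π F * transportCost π'' + transportCost (π.restrict Fᶜ) := by
    rw [hπn]
    unfold transportCost
    rw [lintegral_add_measure, lintegral_smul_measure, smul_eq_mul]
  have hopt := hπ.2.2.2 πn hπnp hmarg0 hmarg1
  have h5 : transportCost (π.restrict F) ≤ π F * transportCost π'' := by
    rw [hπncost, ← hsplit] at hopt
    exact (ENNReal.add_le_add_iff_right hrtop).1 hopt
  have h6 : transportCost ((π F)⁻¹ • π.restrict F) = (π F)⁻¹ * transportCost (π.restrict F) :=
    lintegral_smul_measure _ _
  rw [h6]
  calc (π F)⁻¹ * transportCost (π.restrict F)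
      ≤ (π F)⁻¹ * (π F * transportCost π'') := mul_le_mul_right h5 _
    _ = ((π F)⁻¹ * π F) * transportCost π'' := (mul_assoc _ _ _).symm
    _ = transportCost π'' := by rw [hinv, one_mul]

end MeasureHelpers

/-- The index-selection lemma for the final contradiction. -/
lemma exists_good_index (Rθ Mr mSr wr qr cr K N : ℝ) (hN : 1 ≤ N)
    (hMr : 1 ≤ Mr) (hmSr : 0 ≤ mSr) (hwr : wr ≤ 1 - cr) (hqr : 1 - cr/4 ≤ qr)
    (hcr : 0 < cr) (εr : ℝ) (hεr0 : 0 < εr) (hεrs : εr * mSr ≤ cr / 4) :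
    ∃ n : ℕ, K * Rθ ^ 2 < (N + ((n:ℝ)+1)) * Real.pi ^ 2 ∧
      εr ^ (1 - 1/(N + ((n:ℝ)+1))) * mSr + εr ^ ((1 - 1/(N + ((n:ℝ)+1))) - 1) * wr <
      Real.exp (-(Rθ * Real.sqrt (|K| / (N + ((n:ℝ)+1))))) * Mr ^ (-(1/(N + ((n:ℝ)+1)))) * qr := by
  set Nn : ℕ → ℝ := fun n => N + ((n:ℝ)+1) with hNn
  have hNpos : ∀ n, 0 < Nn n := by
    intro n; rw [hNn]; have : (0:ℝ) ≤ (n:ℝ) := Nat.cast_nonneg n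
    dsimp; linarith
  have htop : Filter.Tendsto Nn Filter.atTop Filter.atTop := by
    have h : Nn = fun n : ℕ => ((n:ℝ) + (N+1)) := by funext n; rw [hNn]; ring
    rw [h]
    exact Filter.tendsto_atTop_add_const_right _ _ tendsto_natCast_atTop_atTop
  have h1 : Filter.Tendsto (fun n => 1/(Nn n)) Filter.atTop (nhds 0) := by
    have h := htop.inv_tendsto_atTop; simp only [one_div]; exact h
  have hcondev : ∀ᶠ n in Filter.atTop, K * Rθ ^ 2 < Nn n * Real.pi ^ 2 := by
    have h2 : Filter.Tendsto (fun n => Nn n * Real.pi ^ 2) Filter.atTop Filter.atTop :=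
      htop.atTop_mul_const (by positivity)
    exact h2.eventually_gt_atTop _
  -- limits
  have hsq : Filter.Tendsto (fun n => Real.sqrt (|K| / Nn n)) Filter.atTop (nhds 0) := by
    have h3 : Filter.Tendsto (fun n => |K| / Nn n) Filter.atTop (nhds 0) := by
      have := h1.const_mul |K|
      simpa [div_eq_mul_inv] using this
    have h4 := (Real.continuous_sqrt.tendsto 0).comp h3
    simpa only [Function.comp_def, Real.sqrt_zero] using h4
  have hexp1 : Filter.Tendsto (fun n => Real.exp (-(Rθ * Real.sqrt (|K| / Nn n))))
      Filter.atTop (nhds 1) := by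
    have h5 : Filter.Tendsto (fun n => -(Rθ * Real.sqrt (|K| / Nn n))) Filter.atTop (nhds 0) := by
      have := (hsq.const_mul Rθ).neg
      simpa using this
    have h6 := (Real.continuous_exp.tendsto 0).comp h5
    simpa only [Function.comp_def, Real.exp_zero] using h6
  have hMr0 : (0:ℝ) < Mr := lt_of_lt_of_le one_pos hMr
  have hMrlim : Filter.Tendsto (fun n => Mr ^ (-(1/(Nn n)))) Filter.atTop (nhds 1) := by
    have h7 : ∀ n, Mr ^ (-(1/(Nn n))) = Real.exp (Real.log Mr * (-(1/(Nn n)))) := by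
      intro n; rw [Real.rpow_def_of_pos hMr0]
    simp only [h7]
    have h8 : Filter.Tendsto (fun n => Real.log Mr * (-(1/(Nn n)))) Filter.atTop (nhds 0) := by
      have := (h1.neg).const_mul (Real.log Mr)
      simpa using this
    have h9 := (Real.continuous_exp.tendsto 0).comp h8
    simpa only [Function.comp_def, Real.exp_zero] using h9
  have hL : Filter.Tendsto
      (fun n => Real.exp (-(Rθ * Real.sqrt (|K| / Nn n))) * Mr ^ (-(1/(Nn n))) * qr)
      Filter.atTop (nhds qr) := by
    have := (hexp1.mul hMrlim).mul_const qr
    simpa using this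
  have halim : Filter.Tendsto (fun n => 1 - 1/(Nn n)) Filter.atTop (nhds 1) := by
    have := h1.const_sub 1
    simpa using this
  have hε1 : Filter.Tendsto (fun n => εr ^ (1 - 1/(Nn n))) Filter.atTop (nhds εr) := by
    have h7 : ∀ n, εr ^ (1 - 1/(Nn n)) = Real.exp (Real.log εr * (1 - 1/(Nn n))) := by
      intro n; rw [Real.rpow_def_of_pos hεr0]
    simp only [h7]
    have h8 : Filter.Tendsto (fun n => Real.log εr * (1 - 1/(Nn n))) Filter.atTop
        (nhds (Real.log εr)) := by
      have := halim.const_mul (Real.log εr)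
      simpa using this
    have h9 := (Real.continuous_exp.tendsto (Real.log εr)).comp h8
    simpa only [Function.comp_def, Real.exp_log hεr0] using h9
  have hε2 : Filter.Tendsto (fun n => εr ^ ((1 - 1/(Nn n)) - 1)) Filter.atTop (nhds 1) := by
    have h7 : ∀ n, εr ^ ((1 - 1/(Nn n)) - 1) = Real.exp (Real.log εr * ((1 - 1/(Nn n)) - 1)) := by
      intro n; rw [Real.rpow_def_of_pos hεr0]
    simp only [h7]
    have h8 : Filter.Tendsto (fun n => Real.log εr * ((1 - 1/(Nn n)) - 1)) Filter.atTop
        (nhds 0) := by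
      have h8a : Filter.Tendsto (fun n => (1 - 1/(Nn n)) - 1) Filter.atTop (nhds 0) := by
        have := halim.sub_const 1
        simpa using this
      have := h8a.const_mul (Real.log εr)
      simpa using this
    have h9 := (Real.continuous_exp.tendsto 0).comp h8
    simpa only [Function.comp_def, Real.exp_zero] using h9
  have hR : Filter.Tendsto
      (fun n => εr ^ (1 - 1/(Nn n)) * mSr + εr ^ ((1 - 1/(Nn n)) - 1) * wr)
      Filter.atTop (nhds (εr * mSr + wr)) := by
    have := (hε1.mul_const mSr).add (hε2.mul_const wr)
    simpa using this
  have hlt : εr * mSr + wr < qr := by nlinarith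
  have hev := hR.eventually_lt hL hlt
  obtain ⟨n, hn1, hn2⟩ := (hev.and hcondev).exists
  exact ⟨n, hn2, hn1⟩

set_option maxHeartbeats 2000000 in
/-- **Proposition 3.1, first part**: between two absolutely continuous measures all interpolants
along the unique optimal geodesic plan are absolutely continuous. -/
theorem interpolant_absolutelyContinuous_of_ac
    [CompleteSpace X] [TopologicalSpace.SeparableSpace X] [ProperSpace X] [BorelSpace X]
    (hX : IsGeodesicSpace X) (m : Measure X)
    (hm_bdd : ∀ s : Set X, Bornology.IsBounded s → m s ≠ ⊤)
    (hm_supp : ∀ x : X, ∀ r : ℝ, 0 < r → 0 < m (ball x r))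
    (K N : ℝ) (hN : 1 ≤ N) (hCD : IsCDStar K N m) (hGT : GoodTransport m)
    (μ₀ μ₁ : Measure X) (hμ₀p : IsProbabilityMeasure μ₀) (hμ₁p : IsProbabilityMeasure μ₁)
    (hμ₀2 : HasFiniteSecondMoment μ₀) (hμ₁2 : HasFiniteSecondMoment μ₁)
    (ρ₀ ρ₁ : X → ℝ≥0∞) (hρ₀ : μ₀ = m.withDensity ρ₀) (hρ₁ : μ₁ = m.withDensity ρ₁)
    (π : Measure (Geo X)) (hπ : IsOptGeo μ₀ μ₁ π) :
    ∀ t : unitInterval, π.map (eval t) ≪ m := by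
  classical
  intro t
  by_contra hac
  obtain ⟨x₀, -⟩ := id hμ₀2
  haveI hsfm : SigmaFinite m := by
    refine ⟨⟨⟨fun n => closedBall x₀ n, fun _ => trivial,
      fun n => lt_top_iff_ne_top.2 (hm_bdd _ isBounded_closedBall), ?_⟩⟩⟩
    exact iUnion_closedBall_nat x₀
  have hμ0ac : μ₀ ≪ m := hρ₀ ▸ withDensity_absolutelyContinuous m ρ₀
  have hμ1ac : μ₁ ≪ m := hρ₁ ▸ withDensity_absolutelyContinuous m ρ₁
  have hev : ∀ s : unitInterval, Measurable (eval (X := X) s) := fun s => measurable_eval' s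
  haveI hπp : IsProbabilityMeasure π := hπ.1
  haveI : IsProbabilityMeasure (π.map (eval t)) := Measure.isProbabilityMeasure_map (hev t).aemeasurable
  -- the singular set
  obtain ⟨C₀, hmC₀, hμC₀⟩ : ∃ s : Set X, m s = 0 ∧ π.map (eval t) s ≠ 0 := by
    by_contra h
    push_neg at h
    exact hac (Measure.AbsolutelyContinuous.mk fun s _ hs => h s hs)
  set C : Set X := toMeasurable m C₀ with hCdef
  have hCm : MeasurableSet C := measurableSet_toMeasurable m C₀
  have hmC : m C = 0 := by rw [hCdef, measure_toMeasurable]; exact hmC₀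
  set c : ℝ≥0∞ := π.map (eval t) C with hcdef
  have hc0 : c ≠ 0 := fun h => hμC₀ (measure_mono_null (subset_toMeasurable m C₀) h)
  have hc1 : c ≤ 1 := prob_le_one
  have hct : c ≠ ⊤ := (hc1.trans_lt ENNReal.one_lt_top).ne
  -- choice of tails
  have htail : ∀ (μ : Measure X), IsProbabilityMeasure μ → ∀ (δ : ℝ≥0∞), 0 < δ →
      ∃ n : ℕ, μ (closedBall x₀ n)ᶜ < δ := by
    intro μ hμ δ hδ
    haveI := hμ
    have h1 : Filter.Tendsto (fun n : ℕ => μ (closedBall x₀ n)ᶜ) Filter.atTop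
        (nhds (μ (⋂ n : ℕ, (closedBall x₀ (n:ℝ))ᶜ))) := by
      apply tendsto_measure_iInter_atTop
      · exact fun n => (measurableSet_closedBall).compl.nullMeasurableSet
      · intro i j hij
        exact compl_subset_compl.2 (closedBall_subset_closedBall (by exact_mod_cast hij))
      · exact ⟨0, measure_ne_top μ _⟩
    have h2 : (⋂ n : ℕ, (closedBall x₀ (n:ℝ))ᶜ) = ∅ := by
      rw [← Set.compl_iUnion, iUnion_closedBall_nat, Set.compl_univ]
    rw [h2] at h1
    simp only [measure_empty] at h1
    exact (h1.eventually_lt_const hδ).exists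
  have hc4 : (0:ℝ≥0∞) < c/4 := ENNReal.div_pos hc0 (by norm_num)
  obtain ⟨R₀, hR₀⟩ := htail μ₀ hμ₀p (c/4) hc4
  obtain ⟨R₁, hR₁⟩ := htail μ₁ hμ₁p (c/4) hc4
  set R : ℕ := max R₀ R₁ with hRdef
  set B : Set X := closedBall x₀ R with hBdef
  have hμ₀B : μ₀ Bᶜ < c/4 := lt_of_le_of_lt (measure_mono (compl_subset_compl.2
    (closedBall_subset_closedBall (by exact_mod_cast le_max_left R₀ R₁)))) hR₀
  have hμ₁B : μ₁ Bᶜ < c/4 := lt_of_le_of_lt (measure_mono (compl_subset_compl.2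
    (closedBall_subset_closedBall (by exact_mod_cast le_max_right R₀ R₁)))) hR₁
  set F : Set (Geo X) := eval 0 ⁻¹' B ∩ eval 1 ⁻¹' B with hFdef
  have hFm : MeasurableSet F :=
    ((hev 0) measurableSet_closedBall).inter ((hev 1) measurableSet_closedBall)
  have hhalf : c/4 + c/4 = c/2 := by
    rw [ENNReal.div_add_div_same, ← two_mul, (show (4:ℝ≥0∞) = 2*2 by norm_num),
      ENNReal.mul_div_mul_left _ _ (by norm_num) (by norm_num)]
  have hπFc : π Fᶜ ≤ c/2 := by
    have hsplit : Fᶜ = (eval 0 ⁻¹' B)ᶜ ∪ (eval 1 ⁻¹' B)ᶜ := by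
      rw [hFdef, Set.compl_inter]
    have h0 : π (eval 0 ⁻¹' B)ᶜ = μ₀ Bᶜ := by
      rw [← hπ.2.1, Measure.map_apply (hev 0) measurableSet_closedBall.compl, Set.preimage_compl]
    have h1 : π (eval 1 ⁻¹' B)ᶜ = μ₁ Bᶜ := by
      rw [← hπ.2.2.1, Measure.map_apply (hev 1) measurableSet_closedBall.compl,
        Set.preimage_compl]
    calc π Fᶜ ≤ π (eval 0 ⁻¹' B)ᶜ + π (eval 1 ⁻¹' B)ᶜ := by
          rw [hsplit]; exact measure_union_le _ _
      _ = μ₀ Bᶜ + μ₁ Bᶜ := by rw [h0, h1]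
      _ ≤ c/4 + c/4 := add_le_add hμ₀B.le hμ₁B.le
      _ = c/2 := hhalf
  have hπF : π F ≠ 0 := by
    intro h0
    have h1 : (1:ℝ≥0∞) = π F + π Fᶜ := by rw [measure_add_measure_compl hFm, measure_univ]
    rw [h0, zero_add] at h1
    have h2 : (1:ℝ≥0∞) ≤ c/2 := h1.le.trans hπFc
    have hc2 : c/2 ≤ 1/2 := ENNReal.div_le_div_right hc1 2
    have h3 := h2.trans hc2
    norm_num at h3
  have hπFt : π F ≠ ⊤ := measure_ne_top π F
  have hinv1 : 1 ≤ (π F)⁻¹ := ENNReal.one_le_inv.2 prob_le_one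
  set πh : Measure (Geo X) := (π F)⁻¹ • π.restrict F with hπhdef
  have hcost : transportCost π ≠ ⊤ :=
    transportCost_ne_top' hπ.2.1 hπ.2.2.1 hμ₀p hμ₁p hμ₀2 hμ₁2
  have hopt : IsOptGeo (πh.map (eval 0)) (πh.map (eval 1)) πh :=
    isOptGeo_restrict hπ hcost hFm hπF
  haveI hπhp : IsProbabilityMeasure πh := hopt.1
  haveI : IsProbabilityMeasure (πh.map (eval 0)) := Measure.isProbabilityMeasure_map (hev 0).aemeasurable
  haveI : IsProbabilityMeasure (πh.map (eval 1)) := Measure.isProbabilityMeasure_map (hev 1).aemeasurable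
  haveI : IsProbabilityMeasure (πh.map (eval t)) := Measure.isProbabilityMeasure_map (hev t).aemeasurable
  have happ : ∀ (s : unitInterval) (A : Set X), MeasurableSet A →
      πh.map (eval s) A = (π F)⁻¹ * π (eval s ⁻¹' A ∩ F) := by
    intro s A hA
    rw [Measure.map_apply (hev s) hA, hπhdef, Measure.smul_apply, smul_eq_mul,
      Measure.restrict_apply ((hev s) hA)]
  have hνac : ∀ (s : unitInterval), π.map (eval s) ≪ m → πh.map (eval s) ≪ m := by
    intro s hμs
    apply Measure.AbsolutelyContinuous.mk
    intro A hA hmA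
    rw [happ s A hA]
    have h1 : π (eval s ⁻¹' A ∩ F) ≤ π (eval s ⁻¹' A) := measure_mono Set.inter_subset_left
    have h2 : π (eval s ⁻¹' A) = π.map (eval s) A := (Measure.map_apply (hev s) hA).symm
    have h3 : π.map (eval s) A = 0 := hμs hmA
    have h4 : π (eval s ⁻¹' A ∩ F) = 0 := le_antisymm (h1.trans_eq (h2.trans h3)) zero_le
    rw [h4, mul_zero]
  have hν₀ac : πh.map (eval 0) ≪ m := hνac 0 (hπ.2.1 ▸ hμ0ac)
  have hν₁ac : πh.map (eval 1) ≪ m := hνac 1 (hπ.2.2.1 ▸ hμ1ac)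
  have hconc : ∀ (s : unitInterval) (A : Set X), MeasurableSet A → (∀ γ ∈ F, eval s γ ∈ A) →
      πh.map (eval s) Aᶜ = 0 := by
    intro s A hA hFA
    rw [happ s Aᶜ hA.compl]
    have h1 : eval s ⁻¹' Aᶜ ∩ F = ∅ := by
      rw [Set.eq_empty_iff_forall_notMem]
      rintro γ ⟨h1, h2⟩
      exact h1 (hFA γ h2)
    rw [h1, measure_empty, mul_zero]
  have hν₀B : πh.map (eval 0) Bᶜ = 0 :=
    hconc 0 B measurableSet_closedBall (fun γ hγ => hγ.1)
  have hν₁B : πh.map (eval 1) Bᶜ = 0 :=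
    hconc 1 B measurableSet_closedBall (fun γ hγ => hγ.2)
  have hmom : ∀ (s : unitInterval) (r : ℝ), πh.map (eval s) (closedBall x₀ r)ᶜ = 0 →
      HasFiniteSecondMoment (πh.map (eval s)) := by
    intro s r h0
    refine ⟨x₀, ?_⟩
    haveI : IsProbabilityMeasure (πh.map (eval s)) :=
      Measure.isProbabilityMeasure_map (hev s).aemeasurable
    have hae : ∀ᵐ x ∂(πh.map (eval s)),
        ENNReal.ofReal (dist x x₀ ^ 2) ≤ ENNReal.ofReal (r ^ 2) := by
      rw [MeasureTheory.ae_iff]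
      apply measure_mono_null ?_ h0
      intro x hx
      simp only [not_le, Set.mem_setOf_eq] at hx
      simp only [Set.mem_compl_iff, mem_closedBall, not_le]
      by_contra h
      push_neg at h
      have hb : dist x x₀ ^ 2 ≤ r ^ 2 := by nlinarith [dist_nonneg (x := x) (y := x₀)]
      exact absurd (ENNReal.ofReal_le_ofReal hb) (not_le.2 hx)
    apply ne_top_of_le_ne_top (ENNReal.ofReal_ne_top (r := r ^ 2)) ?_
    calc ∫⁻ x, ENNReal.ofReal (dist x x₀ ^ 2) ∂(πh.map (eval s))
        ≤ ∫⁻ _, ENNReal.ofReal (r ^ 2) ∂(πh.map (eval s)) := lintegral_mono_ae hae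
      _ = ENNReal.ofReal (r ^ 2) := by rw [lintegral_const, measure_univ, mul_one]
  have hν₀2 : HasFiniteSecondMoment (πh.map (eval 0)) := hmom 0 R hν₀B
  have hν₁2 : HasFiniteSecondMoment (πh.map (eval 1)) := hmom 1 R hν₁B
  -- uniqueness from GT, and the CD* plan
  obtain ⟨hEU, -⟩ := hGT (πh.map (eval 0)) (πh.map (eval 1)) inferInstance inferInstance
    hν₀2 hν₁2 hν₀ac hν₁ac
  obtain ⟨πc, hπcopt, hineq⟩ := hCD (πh.map (eval 0)) (πh.map (eval 1)) inferInstance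
    inferInstance ⟨B, isBounded_closedBall, hν₀B, hν₁B⟩
  obtain ⟨u, -, huniq⟩ := hEU
  have hπc : πc = πh := by rw [huniq πc hπcopt, huniq πh hopt]
  rw [hπc] at hineq
  set ρa : X → ℝ≥0∞ := (πh.map (eval 0)).rnDeriv m with hρadef
  set ρb : X → ℝ≥0∞ := (πh.map (eval 1)).rnDeriv m with hρbdef
  set ρc : X → ℝ≥0∞ := (πh.map (eval t)).rnDeriv m with hρcdef
  -- singular mass of the interpolant of the restricted plan
  have hνtC : c/2 ≤ πh.map (eval t) C := by
    rw [happ t C hCm]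
    have h2 : π (eval t ⁻¹' C) ≤ π (eval t ⁻¹' C ∩ F) + π Fᶜ := by
      refine (measure_mono ?_).trans (measure_union_le _ _)
      intro γ hγ
      by_cases hγF : γ ∈ F
      · exact Or.inl ⟨hγ, hγF⟩
      · exact Or.inr hγF
    have h3 : c = π (eval t ⁻¹' C) := by rw [hcdef, Measure.map_apply (hev t) hCm]
    have h1 : c ≤ π (eval t ⁻¹' C ∩ F) + c/2 :=
      calc c = π (eval t ⁻¹' C) := h3
        _ ≤ π (eval t ⁻¹' C ∩ F) + π Fᶜ := h2
        _ ≤ π (eval t ⁻¹' C ∩ F) + c/2 := add_le_add le_rfl hπFc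
    have h4 : c - c/2 ≤ π (eval t ⁻¹' C ∩ F) := tsub_le_iff_right.2 h1
    rw [ENNReal.sub_half hct] at h4
    calc c/2 ≤ π (eval t ⁻¹' C ∩ F) := h4
      _ = 1 * π (eval t ⁻¹' C ∩ F) := (one_mul _).symm
      _ ≤ (π F)⁻¹ * π (eval t ⁻¹' C ∩ F) := mul_le_mul_left hinv1 _
  set cc : ℝ≥0∞ := c/2 with hccdef
  have hcc0 : cc ≠ 0 := (ENNReal.div_pos hc0 (by norm_num)).ne'
  have hcc1 : cc ≤ 1 := le_trans ENNReal.half_le_self hc1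
  have hcct : cc ≠ ⊤ := (hcc1.trans_lt ENNReal.one_lt_top).ne
  -- total a.c. mass bound
  have hwdle := Measure.withDensity_rnDeriv_le (πh.map (eval t)) m
  set w : ℝ≥0∞ := ∫⁻ x, ρc x ∂m with hwdef
  have hwle : w ≤ 1 - cc := by
    have h1 : w = (m.withDensity ρc) C + (m.withDensity ρc) Cᶜ := by
      rw [measure_add_measure_compl hCm, withDensity_apply _ MeasurableSet.univ,
        Measure.restrict_univ]
    have h2 : (m.withDensity ρc) C = 0 := by
      rw [withDensity_apply _ hCm]
      exact setLIntegral_measure_zero _ _ hmC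
    have h3 : (m.withDensity ρc) Cᶜ ≤ πh.map (eval t) Cᶜ := hwdle Cᶜ
    have h4 : πh.map (eval t) Cᶜ = 1 - πh.map (eval t) C := prob_compl_eq_one_sub hCm
    rw [h1, h2, zero_add]
    calc (m.withDensity ρc) Cᶜ ≤ πh.map (eval t) Cᶜ := h3
      _ = 1 - πh.map (eval t) C := h4
      _ ≤ 1 - cc := tsub_le_tsub_left hνtC 1
  have hwt : w ≠ ⊤ := (hwle.trans_lt (lt_of_le_of_lt tsub_le_self ENNReal.one_lt_top)).ne
  -- the support ball of interpolants
  set S : Set X := closedBall x₀ (3*(R:ℝ)) with hSdef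
  have hSm : MeasurableSet S := measurableSet_closedBall
  have hmS : m S ≠ ⊤ := hm_bdd S isBounded_closedBall
  have hFS : ∀ γ ∈ F, eval t γ ∈ S := by
    intro γ hγ
    have h1 := dist_eval_le' γ t
    have h2 : dist (eval 0 γ) (eval 1 γ) ≤ dist (eval 0 γ) x₀ + dist (eval 1 γ) x₀ :=
      dist_triangle_right _ _ _
    have h3 : dist (eval 0 γ) x₀ ≤ R := hγ.1
    have h4 : dist (eval 1 γ) x₀ ≤ R := hγ.2
    have h5 : dist (eval t γ) x₀ ≤ dist (eval t γ) (eval 0 γ) + dist (eval 0 γ) x₀ :=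
      dist_triangle _ _ _
    simp only [hSdef, mem_closedBall]
    linarith
  have hνtS : πh.map (eval t) Sᶜ = 0 := hconc t S hSm hFS
  have hρcS : ∫⁻ x in Sᶜ, ρc x ∂m = 0 := by
    have h1 : (m.withDensity ρc) Sᶜ ≤ πh.map (eval t) Sᶜ := hwdle Sᶜ
    rw [withDensity_apply _ hSm.compl] at h1
    exact le_antisymm (h1.trans hνtS.le) zero_le
  -- choosing the density cutoff M
  have hMchoice : ∀ (μs : Measure X), IsProbabilityMeasure μs → μs ≪ m → ∀ δ : ℝ≥0∞, 0 < δ →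
      ∃ n : ℕ, μs {x | (n:ℝ≥0∞) < μs.rnDeriv m x} < δ := by
    intro μs hμs hacs δ hδ
    haveI := hμs
    have h0 : μs {x | μs.rnDeriv m x = ⊤} = 0 := by
      apply hacs
      have h1 := Measure.rnDeriv_lt_top μs m
      rw [MeasureTheory.ae_iff] at h1
      have h2 : {x | ¬ μs.rnDeriv m x < ⊤} = {x | μs.rnDeriv m x = ⊤} := by
        ext x; simp [lt_top_iff_ne_top]
      rwa [h2] at h1
    have h2 : Filter.Tendsto (fun n : ℕ => μs {x | (n:ℝ≥0∞) < μs.rnDeriv m x}) Filter.atTop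
        (nhds (μs (⋂ n : ℕ, {x | (n:ℝ≥0∞) < μs.rnDeriv m x}))) := by
      apply tendsto_measure_iInter_atTop
      · exact fun n => (measurableSet_lt measurable_const
          (Measure.measurable_rnDeriv μs m)).nullMeasurableSet
      · intro i j hij x hx
        exact lt_of_le_of_lt (Nat.cast_le.mpr hij : (i:ℝ≥0∞) ≤ j) hx
      · exact ⟨0, measure_ne_top _ _⟩
    have h3 : (⋂ n : ℕ, {x | (n:ℝ≥0∞) < μs.rnDeriv m x}) = {x | μs.rnDeriv m x = ⊤} := by
      ext x
      simp only [Set.mem_iInter, Set.mem_setOf_eq]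
      constructor
      · intro h
        by_contra hne
        obtain ⟨n, hn⟩ := ENNReal.exists_nat_gt hne
        exact absurd (h n) (not_lt.2 hn.le)
      · intro h n
        rw [h]
        exact ENNReal.natCast_lt_top n
    rw [h3, h0] at h2
    exact (h2.eventually_lt_const hδ).exists
  have hcc8 : (0:ℝ≥0∞) < cc/8 := ENNReal.div_pos hcc0 (by norm_num)
  obtain ⟨M₀, hM₀⟩ := hMchoice (πh.map (eval 0)) inferInstance hν₀ac (cc/8) hcc8
  obtain ⟨M₁, hM₁⟩ := hMchoice (πh.map (eval 1)) inferInstance hν₁ac (cc/8) hcc8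
  set Mr : ℝ := max 1 (max (M₀:ℝ) (M₁:ℝ)) with hMrdef
  have hMr1 : 1 ≤ Mr := le_max_left _ _
  set Mop : ℝ≥0∞ := ENNReal.ofReal Mr with hMopdef
  have hM₀le : (M₀:ℝ≥0∞) ≤ Mop := by
    rw [hMopdef, ← ENNReal.ofReal_natCast M₀]
    exact ENNReal.ofReal_le_ofReal ((le_max_left _ _).trans (le_max_right _ _))
  have hM₁le : (M₁:ℝ≥0∞) ≤ Mop := by
    rw [hMopdef, ← ENNReal.ofReal_natCast M₁]
    exact ENNReal.ofReal_le_ofReal ((le_max_right _ _).trans (le_max_right _ _))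
  set G : Set (Geo X) :=
    (eval 0 ⁻¹' {x | ρa x ≤ Mop}) ∩ (eval 1 ⁻¹' {x | ρb x ≤ Mop}) with hGdef
  have hGm : MeasurableSet G :=
    ((hev 0) (measurableSet_le (Measure.measurable_rnDeriv _ _) measurable_const)).inter
      ((hev 1) (measurableSet_le (Measure.measurable_rnDeriv _ _) measurable_const))
  have hhalf2 : cc/8 + cc/8 = cc/4 := by
    rw [ENNReal.div_add_div_same, ← two_mul, (show (8:ℝ≥0∞) = 2*4 by norm_num),
      ENNReal.mul_div_mul_left _ _ (by norm_num) (by norm_num)]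
  have hπhGc : πh Gᶜ ≤ cc/4 := by
    have hset₀ : MeasurableSet {x | Mop < ρa x} :=
      measurableSet_lt measurable_const (Measure.measurable_rnDeriv _ _)
    have hset₁ : MeasurableSet {x | Mop < ρb x} :=
      measurableSet_lt measurable_const (Measure.measurable_rnDeriv _ _)
    have hsub : Gᶜ ⊆ (eval 0 ⁻¹' {x | Mop < ρa x}) ∪ (eval 1 ⁻¹' {x | Mop < ρb x}) := by
      intro γ hγ
      simp only [hGdef, Set.mem_compl_iff, Set.mem_inter_iff, Set.mem_preimage,
        Set.mem_setOf_eq, not_and_or, not_le] at hγ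
      simp only [Set.mem_union, Set.mem_preimage, Set.mem_setOf_eq]
      exact hγ
    calc πh Gᶜ ≤ πh (eval 0 ⁻¹' {x | Mop < ρa x}) + πh (eval 1 ⁻¹' {x | Mop < ρb x}) :=
          (measure_mono hsub).trans (measure_union_le _ _)
      _ = πh.map (eval 0) {x | Mop < ρa x} + πh.map (eval 1) {x | Mop < ρb x} := by
          rw [Measure.map_apply (hev 0) hset₀, Measure.map_apply (hev 1) hset₁]
      _ ≤ πh.map (eval 0) {x | (M₀:ℝ≥0∞) < ρa x} + πh.map (eval 1) {x | (M₁:ℝ≥0∞) < ρb x} :=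
          add_le_add (measure_mono fun x hx => lt_of_le_of_lt hM₀le hx)
            (measure_mono fun x hx => lt_of_le_of_lt hM₁le hx)
      _ ≤ cc/8 + cc/8 := add_le_add hM₀.le hM₁.le
      _ = cc/4 := hhalf2
  set q : ℝ≥0∞ := πh (G ∩ F) with hqdef
  have hqlow : 1 - cc/4 ≤ q := by
    have h1 : πh (G ∩ F)ᶜ ≤ cc/4 := by
      rw [Set.compl_inter]
      refine (measure_union_le _ _).trans ?_
      have hFc0 : πh Fᶜ = 0 := by
        rw [hπhdef, Measure.smul_apply, smul_eq_mul, Measure.restrict_apply hFm.compl,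
          Set.compl_inter_self, measure_empty, mul_zero]
      rw [hFc0, add_zero]
      exact hπhGc
    have h2 := prob_compl_eq_one_sub (μ := πh) (hGm.inter hFm).compl
    rw [compl_compl] at h2
    rw [hqdef, h2]
    exact tsub_le_tsub_left h1 1
  have hq1 : q ≤ 1 := prob_le_one
  have hqt : q ≠ ⊤ := (hq1.trans_lt ENNReal.one_lt_top).ne
  -- real quantities
  set ccr : ℝ := cc.toReal with hccr
  have hccr0 : 0 < ccr := ENNReal.toReal_pos hcc0 hcct
  set qr : ℝ := q.toReal with hqr
  have hcc4le1 : cc/4 ≤ 1 := by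
    refine le_trans (le_trans ?_ (le_refl cc)) hcc1
    rw [ENNReal.div_eq_inv_mul]
    calc 4⁻¹ * cc ≤ 1 * cc := mul_le_mul_left (ENNReal.inv_le_one.2 (by norm_num)) cc
      _ = cc := one_mul cc
  have hqrlow : 1 - ccr/4 ≤ qr := by
    have h1 := ENNReal.toReal_mono hqt hqlow
    rw [ENNReal.toReal_sub_of_le hcc4le1 ENNReal.one_ne_top, ENNReal.toReal_div,
      ENNReal.toReal_one] at h1
    simpa using h1
  set wr : ℝ := w.toReal with hwr
  have hwrle : wr ≤ 1 - ccr := by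
    have h1 := ENNReal.toReal_mono
      (ne_top_of_le_ne_top ENNReal.one_ne_top tsub_le_self) hwle
    rwa [ENNReal.toReal_sub_of_le hcc1 ENNReal.one_ne_top, ENNReal.toReal_one] at h1
  set mSr : ℝ := (m S).toReal with hmSr
  have hmSr0 : 0 ≤ mSr := ENNReal.toReal_nonneg
  set εr : ℝ := min 1 (ccr/(4*(mSr+1))) with hεrdef
  have hεr0 : 0 < εr := lt_min one_pos (by positivity)
  have hεrs : εr * mSr ≤ ccr/4 := by
    calc εr * mSr ≤ (ccr/(4*(mSr+1))) * mSr :=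
          mul_le_mul_of_nonneg_right (min_le_right _ _) hmSr0
      _ ≤ ccr/4 := by
          rw [div_mul_eq_mul_div, div_le_div_iff₀ (by positivity) (by norm_num)]
          nlinarith
  set ε : ℝ≥0∞ := ENNReal.ofReal εr with hεdef
  have hε0 : ε ≠ 0 := (ENNReal.ofReal_pos.2 hεr0).ne'
  have hεt : ε ≠ ⊤ := ENNReal.ofReal_ne_top
  set Rθ : ℝ := 2*(R:ℝ) with hRθdef
  -- the chain of inequalities for each n
  have hchain : ∀ n : ℕ, K * Rθ ^ 2 < (N + ((n:ℝ)+1)) * Real.pi ^ 2 →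
      Real.exp (-(Rθ * Real.sqrt (|K| / (N + ((n:ℝ)+1))))) * Mr ^ (-(1/(N + ((n:ℝ)+1)))) * qr ≤
      εr ^ (1 - 1/(N + ((n:ℝ)+1))) * mSr + εr ^ ((1 - 1/(N + ((n:ℝ)+1))) - 1) * wr := by
    intro n hcnd
    set N' : ℝ := N + ((n:ℝ)+1) with hN'def
    have hn0 : (0:ℝ) ≤ (n:ℝ) := Nat.cast_nonneg n
    have hN'1 : 1 ≤ N' := by rw [hN'def]; linarith
    have hN'0 : 0 < N' := by linarith
    set a : ℝ := 1 - 1/N' with hadef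
    have hinvN : 0 < 1/N' := by positivity
    have hinvN1 : 1/N' < 1 := by rw [div_lt_one hN'0]; rw [hN'def]; linarith
    have ha0 : 0 < a := by rw [hadef]; linarith
    have ha1 : a ≤ 1 := by rw [hadef]; linarith
    set β : ℝ := Real.exp (-(Rθ * Real.sqrt (|K| / N'))) with hβdef
    have hβ0 : (0:ℝ) ≤ β := (Real.exp_pos _).le
    set κ : ℝ≥0∞ := ENNReal.ofReal β * Mop ^ (-(1/N')) with hκdef
    have hineqn := hineq t N' (by rw [hN'def]; linarith)
    have hptwise : ∀ γ ∈ G ∩ F,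
        κ ≤ sigmaCoeff K N' (1 - (t:ℝ)) (dist (eval 0 γ) (eval 1 γ)) *
              (ρa (eval 0 γ)) ^ (-(1/N')) +
            sigmaCoeff K N' (t:ℝ) (dist (eval 0 γ) (eval 1 γ)) *
              (ρb (eval 1 γ)) ^ (-(1/N')) := by
      rintro γ ⟨hγG, hγF⟩
      have hθ0 : 0 ≤ dist (eval 0 γ) (eval 1 γ) := dist_nonneg
      have hθR : dist (eval 0 γ) (eval 1 γ) ≤ Rθ := by
        have h2 := dist_triangle_right (eval 0 γ) (eval 1 γ) x₀
        have h3 : dist (eval 0 γ) x₀ ≤ R := hγF.1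
        have h4 : dist (eval 1 γ) x₀ ≤ R := hγF.2
        rw [hRθdef]; linarith
      have hσ1 : ENNReal.ofReal ((1 - (t:ℝ)) * β) ≤
          sigmaCoeff K N' (1 - (t:ℝ)) (dist (eval 0 γ) (eval 1 γ)) :=
        sigmaCoeff_lower K hN'1 (by linarith [t.2.2]) (by linarith [t.2.1]) hθ0 hθR hcnd
      have hσ2 : ENNReal.ofReal ((t:ℝ) * β) ≤
          sigmaCoeff K N' (t:ℝ) (dist (eval 0 γ) (eval 1 γ)) :=
        sigmaCoeff_lower K hN'1 t.2.1 t.2.2 hθ0 hθR hcnd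
      have hr1 : Mop ^ (-(1/N')) ≤ (ρa (eval 0 γ)) ^ (-(1/N')) :=
        rpow_neg_anti' hγG.1 (by positivity)
      have hr2 : Mop ^ (-(1/N')) ≤ (ρb (eval 1 γ)) ^ (-(1/N')) :=
        rpow_neg_anti' hγG.2 (by positivity)
      have hκeq : κ = ENNReal.ofReal ((1-(t:ℝ))*β) * Mop ^ (-(1/N')) +
          ENNReal.ofReal ((t:ℝ)*β) * Mop ^ (-(1/N')) := by
        rw [hκdef, ← add_mul, ← ENNReal.ofReal_add (by nlinarith [t.2.1, t.2.2])
          (mul_nonneg t.2.1 hβ0)]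
        congr 2
        ring
      rw [hκeq]
      exact add_le_add (mul_le_mul' hσ1 hr1) (mul_le_mul' hσ2 hr2)
    have hstep1 : κ * q ≤ ∫⁻ x, (ρc x) ^ (1 - 1/N') ∂m := by
      calc κ * q = ∫⁻ γ, (G ∩ F).indicator (fun _ => κ) γ ∂πh :=
            (lintegral_indicator_const (hGm.inter hFm) κ).symm
        _ ≤ ∫⁻ γ, (sigmaCoeff K N' (1 - (t:ℝ)) (dist (eval 0 γ) (eval 1 γ)) *
              (ρa (eval 0 γ)) ^ (-(1/N')) +
            sigmaCoeff K N' (t:ℝ) (dist (eval 0 γ) (eval 1 γ)) *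
              (ρb (eval 1 γ)) ^ (-(1/N'))) ∂πh := by
            apply lintegral_mono
            intro γ
            by_cases hγ : γ ∈ G ∩ F
            · rw [Set.indicator_of_mem hγ]
              exact hptwise γ hγ
            · rw [Set.indicator_of_notMem hγ]
              exact zero_le
        _ ≤ ∫⁻ x, (ρc x) ^ (1 - 1/N') ∂m := hineqn
    have hstep2 : ∫⁻ x, (ρc x) ^ (1 - 1/N') ∂m ≤ ε ^ a * m S + ε ^ (a-1) * w := by
      have hsplit : ∫⁻ x, (ρc x) ^ (1 - 1/N') ∂m =
          ∫⁻ x in S, (ρc x) ^ a ∂m + ∫⁻ x in Sᶜ, (ρc x) ^ a ∂m := by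
        rw [hadef, lintegral_add_compl _ hSm]
      have hzero : ∫⁻ x in Sᶜ, (ρc x) ^ a ∂m = 0 := by
        have hae : ρc =ᵐ[m.restrict Sᶜ] 0 :=
          (lintegral_eq_zero_iff (Measure.measurable_rnDeriv _ _)).1 hρcS
        calc ∫⁻ x in Sᶜ, (ρc x) ^ a ∂m = ∫⁻ _ in Sᶜ, (0:ℝ≥0∞) ∂m := by
              apply lintegral_congr_ae
              filter_upwards [hae] with x hx
              rw [Pi.zero_apply] at hx
              rw [hx, ENNReal.zero_rpow_of_pos ha0]
          _ = 0 := lintegral_zero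
      have hSbound : ∫⁻ x in S, (ρc x) ^ a ∂m ≤ ε ^ a * m S + ε ^ (a-1) * w := by
        calc ∫⁻ x in S, (ρc x) ^ a ∂m
            ≤ ∫⁻ x in S, (ε ^ a + ε ^ (a-1) * ρc x) ∂m :=
              lintegral_mono fun x => rpow_le_eps' hε0 hεt ha0 ha1
          _ = ε ^ a * m S + ε ^ (a-1) * ∫⁻ x in S, ρc x ∂m := by
              rw [lintegral_add_left measurable_const, setLIntegral_const,
                lintegral_const_mul _ (Measure.measurable_rnDeriv _ _)]
          _ ≤ ε ^ a * m S + ε ^ (a-1) * w := by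
              refine add_le_add le_rfl ?_
              exact mul_le_mul_right ((setLIntegral_le_lintegral _ _).trans_eq hwdef.symm) _
      rw [hsplit, hzero, add_zero]
      exact hSbound
    have hεa : ε ^ a = ENNReal.ofReal (εr ^ a) := by
      rw [hεdef, ENNReal.ofReal_rpow_of_pos hεr0]
    have hεa1 : ε ^ (a-1) = ENNReal.ofReal (εr ^ (a-1)) := by
      rw [hεdef, ENNReal.ofReal_rpow_of_pos hεr0]
    have hfin : ε ^ a * m S + ε ^ (a-1) * w ≠ ⊤ := by
      apply ENNReal.add_ne_top.2
      constructor
      · exact ENNReal.mul_ne_top (by rw [hεa]; exact ENNReal.ofReal_ne_top) hmS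
      · exact ENNReal.mul_ne_top (by rw [hεa1]; exact ENNReal.ofReal_ne_top) hwt
    have hRR := ENNReal.toReal_mono hfin (hstep1.trans hstep2)
    have hMop : Mop ^ (-(1/N')) = ENNReal.ofReal (Mr ^ (-(1/N'))) := by
      rw [hMopdef, ENNReal.ofReal_rpow_of_pos (by linarith)]
    have hL : (κ * q).toReal = β * Mr ^ (-(1/N')) * qr := by
      rw [ENNReal.toReal_mul, hκdef, ENNReal.toReal_mul, ENNReal.toReal_ofReal hβ0, hMop,
        ENNReal.toReal_ofReal (by positivity)]
    have hRr : (ε ^ a * m S + ε ^ (a-1) * w).toReal = εr ^ a * mSr + εr ^ (a-1) * wr := by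
      rw [ENNReal.toReal_add (ENNReal.mul_ne_top (by rw [hεa]; exact ENNReal.ofReal_ne_top) hmS)
          (ENNReal.mul_ne_top (by rw [hεa1]; exact ENNReal.ofReal_ne_top) hwt),
        ENNReal.toReal_mul, ENNReal.toReal_mul, hεa, hεa1,
        ENNReal.toReal_ofReal (by positivity), ENNReal.toReal_ofReal (by positivity)]
    rw [hL, hRr] at hRR
    exact hRR
  obtain ⟨n, hcnd, hgt⟩ := exists_good_index Rθ Mr mSr wr qr ccr K N hN hMr1 hmSr0
    hwrle hqrlow hccr0 εr hεr0 hεrs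
  exact absurd (hchain n hcnd) (not_le.2 hgt)

end
end

section
/- Let (X,d) be a proper geodesic metric space, let phi be a c-concave function on X and let Omega ⊂ X be the interior of the set {phi > -∞}. Then phi is locally bounded on Omega and locally Lipschitz on Omega. -/
open MeasureTheory Metric Set unitInterval ENNReal NNReal

noncomputable section

variable {X : Type*} [MetricSpace X]

variable [MeasurableSpace X]

/-- **Lemma 3.3, first part**: a `c`-concave function on a proper geodesic space is locally
bounded and locally Lipschitz on the interior of `{φ > -∞}`. -/
theorem cConcave_locally_bounded_and_lipschitz
    [ProperSpace X] (hX : IsGeodesicSpace X)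
    (φ : X → EReal) (hφ : cConcave φ) :
    ∀ x ∈ interior {x | φ x ≠ ⊥},
      ∃ U ∈ nhds x,
        (∃ a b : ℝ, ∀ y ∈ U, (a : EReal) ≤ φ y ∧ φ y ≤ (b : EReal)) ∧
        ∃ L : ℝ≥0, LipschitzOnWith L (fun y => (φ y).toReal) U := by
  obtain ⟨hne, htop, ψ, hψtop, hrep⟩ := hφ
  intro x₀ hx₀
  have hx₀S : φ x₀ ≠ ⊥ := interior_subset hx₀
  have hφ_le : ∀ x y, φ x ≤ ((dist x y ^ 2 / 2 : ℝ) : EReal) - ψ y := by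
    intro x y
    have h := iInf_le (fun y => ((dist x y ^ 2 / 2 : ℝ) : EReal) - ψ y) y
    rw [← hrep x] at h
    exact h
  -- some y₀ with ψ y₀ real
  obtain ⟨y₀, hy₀⟩ : ∃ y, ψ y ≠ ⊥ := by
    by_contra h
    push_neg at h
    apply htop x₀
    rw [hrep x₀]
    exact iInf_eq_top.mpr fun y => by rw [h y, EReal.coe_sub_bot]
  obtain ⟨t₀, ht₀⟩ : ∃ t : ℝ, ψ y₀ = (t : EReal) :=
    ⟨(ψ y₀).toReal, (EReal.coe_toReal (hψtop y₀) hy₀).symm⟩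
  have hup0 : ∀ x : X, φ x ≤ ((dist x y₀ ^ 2 / 2 - t₀ : ℝ) : EReal) := by
    intro x
    have h := hφ_le x y₀
    rwa [ht₀, ← EReal.coe_sub] at h
  -- quadratic upper bound on ψ from any finiteness point
  have hψ_le : ∀ z : X, ∀ gz : ℝ, φ z = (gz : EReal) → ∀ y : X, ∀ p : ℝ,
      ψ y = (p : EReal) → p ≤ dist z y ^ 2 / 2 - gz := by
    intro z gz hz y p hp
    have h := hφ_le z y
    rw [hz, hp, ← EReal.coe_sub, EReal.coe_le_coe_iff] at h
    linarith
  -- a closed ball inside the domain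
  obtain ⟨ε, hε, hball⟩ : ∃ ε > 0, Metric.closedBall x₀ ε ⊆ {x | φ x ≠ ⊥} :=
    (Metric.nhds_basis_closedBall.mem_iff).mp (mem_interior_iff_mem_nhds.mp hx₀)
  obtain ⟨δ, hδ, hδε⟩ : ∃ δ : ℝ, 0 < δ ∧ δ + δ ≤ ε := ⟨ε / 2, by linarith, by linarith⟩
  have hsub : Metric.closedBall x₀ δ ⊆ Metric.closedBall x₀ ε :=
    Metric.closedBall_subset_closedBall (by linarith)
  have hfinb : ∀ z ∈ Metric.closedBall x₀ ε, ∃ r : ℝ, φ z = (r : EReal) :=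
    fun z hz => ⟨(φ z).toReal, (EReal.coe_toReal (htop z) (hball hz)).symm⟩
  -- finite net
  obtain ⟨net, hnet_sub, hnet_fin, hnet_cov⟩ :=
    (isCompact_closedBall x₀ ε).finite_cover_balls (e := δ / 2) (by positivity)
  obtain ⟨M, hM⟩ : ∃ M : ℝ, ∀ z ∈ net, -(φ z).toReal ≤ M := by
    obtain ⟨M, hM⟩ := (hnet_fin.image fun z => -(φ z).toReal).bddAbove
    exact ⟨M, fun z hz => hM (Set.mem_image_of_mem _ hz)⟩
  -- upper bound on the small ball
  obtain ⟨b, hupb⟩ : ∃ b : ℝ, ∀ x' ∈ Metric.closedBall x₀ δ, φ x' ≤ (b : EReal) := by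
    refine ⟨(dist x₀ y₀ + δ) ^ 2 / 2 - t₀, fun x' hx' =>
      (hup0 x').trans (EReal.coe_le_coe_iff.mpr ?_)⟩
    have h1 : dist x' y₀ ≤ dist x₀ y₀ + δ := by
      have h2 := dist_triangle x' x₀ y₀
      have h3 : dist x' x₀ ≤ δ := Metric.mem_closedBall.mp hx'
      linarith
    have h0 : (0:ℝ) ≤ dist x' y₀ := dist_nonneg
    nlinarith [mul_nonneg (sub_nonneg.mpr h1) (by linarith : (0:ℝ) ≤ dist x₀ y₀ + δ + dist x' y₀)]
  -- localization of near-optimal points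
  obtain ⟨R, hδR, hloc⟩ : ∃ R : ℝ, δ ≤ R ∧ ∀ x' ∈ Metric.closedBall x₀ δ, ∀ y : X, ∀ p : ℝ,
      ψ y = (p : EReal) → dist x' y ^ 2 / 2 - p ≤ b + 1 → dist x' y ≤ R := by
    refine ⟨max δ ((2 * (b + 1 + M) + δ ^ 2 / 4) / δ), le_max_left _ _, ?_⟩
    intro x' hx' y p hp hle
    rcases le_or_gt (dist x' y) δ with h | h
    · exact h.trans (le_max_left _ _)
    · have hD : 0 < dist x' y := hδ.trans h
      obtain ⟨γ, hγ0, hγ1⟩ := hX x' y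
      have e0 : γ.1 0 = x' := hγ0
      have e1 : γ.1 1 = y := hγ1
      have hmem : δ / dist x' y ∈ unitInterval :=
        ⟨by positivity, by rw [div_le_one hD]; linarith⟩
      have habs : |δ / dist x' y| = δ / dist x' y := abs_of_nonneg (by positivity)
      have hz'x : dist (γ.1 ⟨δ / dist x' y, hmem⟩) x' = δ := by
        have h2 := γ.2 ⟨δ / dist x' y, hmem⟩ 0
        rw [e0, e1] at h2
        have hc : ((⟨δ / dist x' y, hmem⟩ : unitInterval) : ℝ) = δ / dist x' y := rfl
        have h0 : ((0 : unitInterval) : ℝ) = 0 := rfl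
        rw [hc, h0, sub_zero, habs] at h2
        rw [h2]
        field_simp
      have hz'y : dist (γ.1 ⟨δ / dist x' y, hmem⟩) y = dist x' y - δ := by
        have h2 := γ.2 ⟨δ / dist x' y, hmem⟩ 1
        rw [e0, e1] at h2
        have hc : ((⟨δ / dist x' y, hmem⟩ : unitInterval) : ℝ) = δ / dist x' y := rfl
        have h1 : ((1 : unitInterval) : ℝ) = 1 := rfl
        rw [hc, h1] at h2
        have habs1 : |δ / dist x' y - 1| = 1 - δ / dist x' y := by
          rw [abs_of_nonpos (by rw [sub_nonpos, div_le_one hD]; linarith)]; ring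
        rw [habs1] at h2
        rw [h2]
        field_simp
      have hz'ball : γ.1 ⟨δ / dist x' y, hmem⟩ ∈ Metric.closedBall x₀ ε := by
        rw [Metric.mem_closedBall]
        have h2 := dist_triangle (γ.1 ⟨δ / dist x' y, hmem⟩) x' x₀
        have h3 : dist x' x₀ ≤ δ := Metric.mem_closedBall.mp hx'
        linarith [hz'x]
      obtain ⟨z, hz_mem, hz_near⟩ : ∃ z ∈ net, dist (γ.1 ⟨δ / dist x' y, hmem⟩) z < δ / 2 := by
        have hcov := hnet_cov hz'ball
        simp only [Set.mem_iUnion, Metric.mem_ball] at hcov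
        obtain ⟨z, hz1, hz2⟩ := hcov
        exact ⟨z, hz1, hz2⟩
      obtain ⟨gz, hgz⟩ := hfinb z (hnet_sub hz_mem)
      have hgzM : -gz ≤ M := by
        have h2 := hM z hz_mem
        rw [hgz, EReal.toReal_coe] at h2
        exact h2
      have hψb := hψ_le z gz hgz y p hp
      have hzy : dist z y ≤ dist x' y - δ / 2 := by
        have h2 := dist_triangle z (γ.1 ⟨δ / dist x' y, hmem⟩) y
        have h3 : dist z (γ.1 ⟨δ / dist x' y, hmem⟩)
            = dist (γ.1 ⟨δ / dist x' y, hmem⟩) z := dist_comm _ _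
        linarith [hz'y]
      have h2 : p ≤ (dist x' y - δ / 2) ^ 2 / 2 + M := by
        have h0 : (0:ℝ) ≤ dist z y := dist_nonneg
        nlinarith [mul_nonneg (sub_nonneg.mpr hzy)
          (by linarith : (0:ℝ) ≤ dist x' y - δ / 2 + dist z y)]
      have hfin : dist x' y ≤ (2 * (b + 1 + M) + δ ^ 2 / 4) / δ := by
        rw [le_div_iff₀ hδ]
        nlinarith
      exact hfin.trans (le_max_right _ _)
  -- lower bound on the small ball
  obtain ⟨a, hlow⟩ : ∃ a : ℝ, ∀ x' ∈ Metric.closedBall x₀ δ, (a : EReal) ≤ φ x' := by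
    obtain ⟨g₀, hg₀⟩ : ∃ r : ℝ, φ x₀ = (r : EReal) :=
      ⟨(φ x₀).toReal, (EReal.coe_toReal (htop x₀) hx₀S).symm⟩
    refine ⟨min (b + 1) (-((δ + R) ^ 2 / 2 - g₀)), ?_⟩
    intro x' hx'
    rw [hrep x']
    refine le_iInf fun y => ?_
    rcases eq_or_ne (ψ y) ⊥ with h | h
    · rw [h, EReal.coe_sub_bot]; exact le_top
    · obtain ⟨p, hp⟩ : ∃ p : ℝ, ψ y = (p : EReal) :=
        ⟨(ψ y).toReal, (EReal.coe_toReal (hψtop y) h).symm⟩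
      rw [hp, ← EReal.coe_sub]
      refine EReal.coe_le_coe_iff.mpr ?_
      rcases le_or_gt (dist x' y ^ 2 / 2 - p) (b + 1) with hc | hc
      · have hxy : dist x' y ≤ R := hloc x' hx' y p hp hc
        have hd : dist x₀ y ≤ δ + R := by
          have h2 := dist_triangle x₀ x' y
          have h3 : dist x' x₀ ≤ δ := Metric.mem_closedBall.mp hx'
          rw [dist_comm x₀ x'] at h2
          linarith
        have hq := hψ_le x₀ g₀ hg₀ y p hp
        have h0 : (0:ℝ) ≤ dist x₀ y := dist_nonneg
        have h0' : (0:ℝ) ≤ dist x' y ^ 2 / 2 := by positivity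
        have hsq : dist x₀ y ^ 2 ≤ (δ + R) ^ 2 := by
          nlinarith [mul_nonneg (sub_nonneg.mpr hd) (by linarith : (0:ℝ) ≤ δ + R + dist x₀ y)]
        have := min_le_right (b + 1) (-((δ + R) ^ 2 / 2 - g₀))
        linarith
      · exact le_trans (min_le_left _ _) hc.le
  -- key Lipschitz-type estimate
  obtain ⟨L, hL0, hLeq⟩ : ∃ L : ℝ, 0 ≤ L ∧ L = R + δ := ⟨R + δ, by linarith, rfl⟩
  have hkey : ∀ u ∈ Metric.ball x₀ δ, ∀ v ∈ Metric.ball x₀ δ,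
      (φ u).toReal ≤ (φ v).toReal + L * dist u v := by
    intro u hu v hv
    have hu' : u ∈ Metric.closedBall x₀ δ := Metric.ball_subset_closedBall hu
    have hv' : v ∈ Metric.closedBall x₀ δ := Metric.ball_subset_closedBall hv
    obtain ⟨gu, hgu⟩ := hfinb u (hsub hu')
    obtain ⟨gv, hgv⟩ := hfinb v (hsub hv')
    have hgu' : (φ u).toReal = gu := by rw [hgu, EReal.toReal_coe]
    have hgv' : (φ v).toReal = gv := by rw [hgv, EReal.toReal_coe]
    rw [hgu', hgv']
    by_contra hcon
    push_neg at hcon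
    obtain ⟨η, hη, hη1, hη2⟩ : ∃ η : ℝ, 0 < η ∧ η ≤ 1 ∧ η ≤ (gu - gv - L * dist u v) / 2 :=
      ⟨min ((gu - gv - L * dist u v) / 2) 1, lt_min (by linarith) one_pos,
        min_le_right _ _, min_le_left _ _⟩
    have hlt : φ v < (((gv + η : ℝ)) : EReal) := by
      rw [hgv]
      exact EReal.coe_lt_coe_iff.mpr (by linarith)
    rw [hrep v] at hlt
    obtain ⟨y, hy⟩ := iInf_lt_iff.mp hlt
    have hyb : ψ y ≠ ⊥ := by
      intro h
      rw [h, EReal.coe_sub_bot] at hy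
      exact not_top_lt hy
    obtain ⟨p, hp⟩ : ∃ p : ℝ, ψ y = (p : EReal) :=
      ⟨(ψ y).toReal, (EReal.coe_toReal (hψtop y) hyb).symm⟩
    rw [hp, ← EReal.coe_sub, EReal.coe_lt_coe_iff] at hy
    have hgvb : gv ≤ b := by
      have h := hupb v hv'
      rw [hgv, EReal.coe_le_coe_iff] at h
      exact h
    have hC : dist v y ^ 2 / 2 - p ≤ b + 1 := by linarith
    have hvy : dist v y ≤ R := hloc v hv' y p hp hC
    have hu2 := hφ_le u y
    rw [hgu, hp, ← EReal.coe_sub, EReal.coe_le_coe_iff] at hu2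
    have hduy : dist u y ≤ dist u v + dist v y := dist_triangle u v y
    have huv : dist u v ≤ δ + δ := by
      have h2 := dist_triangle u x₀ v
      have h3 : dist u x₀ < δ := Metric.mem_ball.mp hu
      have h4 : dist x₀ v < δ := by rw [dist_comm]; exact Metric.mem_ball.mp hv
      linarith
    have h0uv : (0:ℝ) ≤ dist u v := dist_nonneg
    have h0uy : (0:ℝ) ≤ dist u y := dist_nonneg
    have h0vy : (0:ℝ) ≤ dist v y := dist_nonneg
    nlinarith [mul_nonneg (by linarith : (0:ℝ) ≤ dist u v + dist v y - dist u y)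
        (by linarith : (0:ℝ) ≤ dist u v + dist v y + dist u y),
      mul_nonneg h0uv (by linarith : (0:ℝ) ≤ δ + R - dist u v / 2 - dist v y)]
  refine ⟨Metric.ball x₀ δ, Metric.ball_mem_nhds x₀ hδ, ⟨a, b, fun y hy =>
    ⟨hlow y (Metric.ball_subset_closedBall hy), hupb y (Metric.ball_subset_closedBall hy)⟩⟩,
    NNReal.mk L hL0, ?_⟩
  rw [lipschitzOnWith_iff_dist_le_mul]
  intro u hu v hv
  rw [Real.dist_eq, abs_sub_le_iff]
  simp only [NNReal.coe_mk]
  constructor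
  · have := hkey u hu v hv; linarith
  · have := hkey v hv u hu; rw [dist_comm v u] at this; linarith

end
end

section
/- Let (X,d) be a proper geodesic metric space, let phi be a c-concave function on X and let Omega ⊂ X be the interior of the set {phi > -∞}. Then for every compact set K ⊂ Omega the set ∪_{x ∈ K} ∂^c phi(x) is bounded and nonempty; in particular, ∂^c phi(x) is nonempty for every x ∈ Omega. -/
open MeasureTheory Metric Set unitInterval ENNReal NNReal

noncomputable section

variable {X : Type*} [MetricSpace X]

variable [MeasurableSpace X]

private lemma ereal_exists_real {a : EReal} (hb : a ≠ ⊥) (ht : a ≠ ⊤) :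
    ∃ r : ℝ, a = (r : EReal) := by
  induction a using EReal.rec with
  | bot => exact absurd rfl hb
  | coe a => exact ⟨a, rfl⟩
  | top => exact absurd rfl ht

private lemma ereal_le_sub_comm {a b : EReal} {r : ℝ} (h : a ≤ (r : EReal) - b) :
    b ≤ (r : EReal) - a := by
  induction a using EReal.rec with
  | bot => rw [EReal.coe_sub_bot]; exact le_top
  | coe a =>
    induction b using EReal.rec with
    | bot => exact bot_le
    | coe b =>
      rw [show (r : EReal) - (b : EReal) = ((r - b : ℝ) : EReal) from (EReal.coe_sub r b).symm]
        at h
      rw [show (r : EReal) - (a : EReal) = ((r - a : ℝ) : EReal) from (EReal.coe_sub r a).symm]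
      have := EReal.coe_le_coe_iff.mp h
      exact EReal.coe_le_coe_iff.mpr (by linarith)
    | top => rw [EReal.sub_top] at h; exact absurd h (by simp)
  | top =>
    induction b using EReal.rec with
    | bot => exact bot_le
    | coe b =>
      rw [show (r : EReal) - (b : EReal) = ((r - b : ℝ) : EReal) from (EReal.coe_sub r b).symm]
        at h
      exact absurd (top_le_iff.mp h) (EReal.coe_ne_top _)
    | top => rw [EReal.sub_top] at h; exact absurd h (by simp)

private lemma ereal_sub_le_sub_const {b b' : EReal} (h : b ≤ b') (r : ℝ) :
    (r : EReal) - b' ≤ (r : EReal) - b := by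
  induction b using EReal.rec with
  | bot => rw [EReal.coe_sub_bot]; exact le_top
  | coe b =>
    induction b' using EReal.rec with
    | bot => exact absurd h (by simp)
    | coe b' =>
      rw [show (r : EReal) - (b : EReal) = ((r - b : ℝ) : EReal) from (EReal.coe_sub r b).symm,
        show (r : EReal) - (b' : EReal) = ((r - b' : ℝ) : EReal) from (EReal.coe_sub r b').symm]
      have := EReal.coe_le_coe_iff.mp h
      exact EReal.coe_le_coe_iff.mpr (by linarith)
    | top => rw [EReal.sub_top]; exact bot_le
  | top =>
    have : b' = ⊤ := top_le_iff.mp h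
    rw [this]

private lemma arith_aux {D r mu b a M m0 duy : ℝ}
    (h4 : mu ≤ duy ^ 2 / 2 - b) (h6 : duy ^ 2 ≤ (D - r / 2) ^ 2)
    (hyR : D ^ 2 / 2 - b ≤ a + 1) (h5 : a ≤ M) (hm : m0 ≤ mu) :
    r / 2 * D ≤ M + 1 + r ^ 2 / 8 - m0 := by
  nlinarith [h4, h6, hyR, h5, hm]

private lemma cTransform_ne_top (φ : X → EReal) (hφ : cConcave φ) (y : X) :
    cTransform φ y ≠ ⊤ := by
  obtain ⟨⟨x₁, hx₁⟩, htop, -⟩ := hφ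
  obtain ⟨a₁, ha₁⟩ := ereal_exists_real hx₁ (htop x₁)
  have h : cTransform φ y ≤ ((dist x₁ y ^ 2 / 2 : ℝ) : EReal) - φ x₁ :=
    iInf_le (fun x => ((dist x y ^ 2 / 2 : ℝ) : EReal) - φ x) x₁
  rw [ha₁, ← EReal.coe_sub] at h
  exact ne_top_of_le_ne_top (EReal.coe_ne_top _) h

/-- The key quantitative bound: on a compact subset of the interior of the domain of a
`c`-concave function, near-optimal points in the defining infimum are at uniformly bounded
distance. -/
private lemma key_bound [ProperSpace X] (hX : IsGeodesicSpace X)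
    (φ : X → EReal) (hφ : cConcave φ)
    {K : Set X} (hK : IsCompact K) (hKΩ : K ⊆ interior {x | φ x ≠ ⊥}) :
    ∃ C : ℝ, 0 < C ∧ ∀ x ∈ K, ∀ y : X,
      ((dist x y ^ 2 / 2 : ℝ) : EReal) - cTransform φ y ≤ φ x + 1 → dist x y ≤ C := by
  have hφ' := hφ
  obtain ⟨hne, htop, ψ, hψtop, hψ⟩ := hφ
  rcases K.eq_empty_or_nonempty with hKe | hKne
  · exact ⟨1, one_pos, by simp [hKe]⟩
  have hreal : ∀ z ∈ interior {x | φ x ≠ ⊥}, ∃ a : ℝ, φ z = (a : EReal) := fun z hz =>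
    ereal_exists_real (interior_subset hz) (htop z)
  obtain ⟨δ, δpos, hδ⟩ := hK.exists_thickening_subset_open isOpen_interior hKΩ
  set r := δ / 2 with hrdef
  have rpos : 0 < r := half_pos δpos
  set K' := Metric.cthickening r K with hK'def
  have hK'sub : K' ⊆ interior {x | φ x ≠ ⊥} :=
    (Metric.cthickening_subset_thickening' δpos (half_lt_self δpos) K).trans hδ
  have hK'cpt : IsCompact K' :=
    isCompact_of_isClosed_isBounded Metric.isClosed_cthickening hK.isBounded.cthickening
  have hKK' : K ⊆ K' := Metric.self_subset_cthickening K
  -- a point where ψ is real, giving an upper bound for φ on K'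
  have hy₀ : ∃ y₀ : X, ψ y₀ ≠ ⊥ := by
    by_contra h
    push_neg at h
    obtain ⟨x₁, hx₁⟩ := hne
    refine htop x₁ ?_
    rw [hψ x₁]
    refine iInf_eq_top.mpr fun y => ?_
    rw [h y, EReal.coe_sub_bot]
  obtain ⟨y₀, hy₀b⟩ := hy₀
  obtain ⟨s₀, hs₀⟩ := ereal_exists_real hy₀b (hψtop y₀)
  obtain ⟨R, hR⟩ := hK'cpt.isBounded.subset_closedBall y₀
  set M := R ^ 2 / 2 - s₀ with hM
  have hMbd : ∀ z ∈ K', ∀ a : ℝ, φ z = (a : EReal) → a ≤ M := by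
    intro z hz a ha
    have h1 : φ z ≤ ((dist z y₀ ^ 2 / 2 : ℝ) : EReal) - ψ y₀ := by
      rw [hψ z]; exact iInf_le _ y₀
    rw [ha, hs₀, ← EReal.coe_sub] at h1
    have h2 : a ≤ dist z y₀ ^ 2 / 2 - s₀ := EReal.coe_le_coe_iff.mp h1
    have h3 : dist z y₀ ≤ R := by simpa [Metric.mem_closedBall] using hR hz
    have h4 : dist z y₀ ^ 2 ≤ R ^ 2 := by nlinarith [dist_nonneg (x := z) (y := y₀)]
    rw [hM]; linarith
  -- a finite net of K'
  obtain ⟨F, hFK', hFcov⟩ := hK'cpt.elim_nhds_subcover (fun u => Metric.ball u (r / 2))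
    (fun u _ => Metric.ball_mem_nhds u (by positivity))
  have hFne : F.Nonempty := by
    obtain ⟨x0, hx0⟩ := hKne
    have hx0' : x0 ∈ ⋃ u ∈ F, Metric.ball u (r / 2) := hFcov (hKK' hx0)
    simp only [Set.mem_iUnion] at hx0'
    obtain ⟨u, hu, -⟩ := hx0'
    exact ⟨u, hu⟩
  set m₀ := F.inf' hFne (fun u => (φ u).toReal) with hm₀
  refine ⟨max r ((M + 1 + r ^ 2 / 8 - m₀) * (2 / r)),
    lt_of_lt_of_le rpos (le_max_left _ _), ?_⟩
  intro x hx y hy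
  obtain ⟨a, ha⟩ := hreal x (hKΩ hx)
  set D := dist x y with hD
  by_cases hDr : D ≤ r
  · exact hDr.trans (le_max_left _ _)
  push_neg at hDr
  have Dpos : 0 < D := rpos.trans hDr
  -- the value of the c-transform at y is a real number
  have hctop : cTransform φ y ≠ ⊤ := cTransform_ne_top φ hφ' y
  have hcbot : cTransform φ y ≠ ⊥ := by
    intro hb
    rw [hb, EReal.coe_sub_bot, ha] at hy
    have : ((a : EReal) + 1) = ((a + 1 : ℝ) : EReal) := by
      rw [EReal.coe_add, EReal.coe_one]
    rw [this] at hy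
    exact absurd (top_le_iff.mp hy) (EReal.coe_ne_top _)
  obtain ⟨b, hb⟩ := ereal_exists_real hcbot hctop
  have hyR : D ^ 2 / 2 - b ≤ a + 1 := by
    rw [ha, hb, ← EReal.coe_sub] at hy
    have h1 : ((a : EReal) + 1) = ((a + 1 : ℝ) : EReal) := by
      rw [EReal.coe_add, EReal.coe_one]
    rw [h1] at hy
    exact EReal.coe_le_coe_iff.mp hy
  -- the geodesic point at distance r from x towards y
  obtain ⟨γ, hγ0, hγ1⟩ := hX x y
  have hγ0' : γ.1 0 = x := hγ0
  have hγ1' : γ.1 1 = y := hγ1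
  have ht0 : (0 : ℝ) ≤ r / D := le_of_lt (div_pos rpos Dpos)
  have ht1 : r / D ≤ 1 := (div_le_one Dpos).mpr hDr.le
  set s : unitInterval := ⟨r / D, ht0, ht1⟩ with hs
  set w := γ.1 s with hw
  have hxw : dist x w = r := by
    have h := γ.2 0 s
    rw [hγ0', hγ1'] at h
    rw [hw, h]
    simp only [Set.Icc.coe_zero, hs]
    rw [zero_sub, abs_neg, abs_of_nonneg ht0, ← hD, div_mul_cancel₀ r Dpos.ne']
  have hwy : dist w y = D - r := by
    have h := γ.2 s 1
    rw [hγ0', hγ1'] at h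
    rw [hw, h]
    simp only [Set.Icc.coe_one, hs]
    rw [abs_of_nonpos (by linarith), ← hD]
    field_simp
    ring
  have hwK' : w ∈ K' :=
    Metric.mem_cthickening_of_dist_le w x r K hx (by rw [dist_comm, hxw])
  obtain ⟨u, huF, hwu⟩ : ∃ u ∈ F, w ∈ Metric.ball u (r / 2) := by
    have h := hFcov hwK'
    simpa only [Set.mem_iUnion, exists_prop] using h
  obtain ⟨mu, hmu⟩ := hreal u (hK'sub (hFK' u huF))
  have hm₀mu : m₀ ≤ mu := by
    have h := Finset.inf'_le (fun u => (φ u).toReal) huF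
    rwa [hmu, EReal.toReal_coe] at h
  have huy : dist u y ≤ D - r / 2 := by
    have h1 : dist w u < r / 2 := Metric.mem_ball.mp hwu
    calc dist u y ≤ dist u w + dist w y := dist_triangle _ _ _
      _ ≤ D - r / 2 := by rw [hwy, dist_comm]; linarith
  have h2 : cTransform φ y ≤ ((dist u y ^ 2 / 2 : ℝ) : EReal) - φ u :=
    iInf_le (fun z => ((dist z y ^ 2 / 2 : ℝ) : EReal) - φ z) u
  have h3 : φ u ≤ ((dist u y ^ 2 / 2 : ℝ) : EReal) - cTransform φ y := ereal_le_sub_comm h2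
  rw [hmu, hb, ← EReal.coe_sub] at h3
  have h4 : mu ≤ dist u y ^ 2 / 2 - b := EReal.coe_le_coe_iff.mp h3
  have h5 : a ≤ M := hMbd x (hKK' hx) a ha
  have h6 : dist u y ^ 2 ≤ (D - r / 2) ^ 2 := by
    nlinarith [dist_nonneg (x := u) (y := y)]
  have h7 : r / 2 * D ≤ M + 1 + r ^ 2 / 8 - m₀ := arith_aux h4 h6 hyR h5 hm₀mu
  have h8 : D ≤ (M + 1 + r ^ 2 / 8 - m₀) * (2 / r) := by
    have h2r : (0 : ℝ) ≤ 2 / r := by positivity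
    calc D = (r / 2 * D) * (2 / r) := by field_simp
      _ ≤ (M + 1 + r ^ 2 / 8 - m₀) * (2 / r) := mul_le_mul_of_nonneg_right h7 h2r
  exact h8.trans (le_max_right _ _)

/-- Nonemptiness of the `c`-superdifferential at interior points of the domain. -/
private lemma superdiff_nonempty [ProperSpace X] (hX : IsGeodesicSpace X)
    (φ : X → EReal) (hφ : cConcave φ) {x : X} (hx : x ∈ interior {x | φ x ≠ ⊥}) :
    {y | (x, y) ∈ cSuperdiff φ}.Nonempty := by
  obtain ⟨C, Cpos, hC⟩ := key_bound hX φ hφ isCompact_singleton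
    (Set.singleton_subset_iff.mpr hx)
  have hφ' := hφ
  obtain ⟨hne, htop, ψ, hψtop, hψ⟩ := hφ
  obtain ⟨a, ha⟩ := ereal_exists_real (interior_subset hx) (htop x)
  have hψle : ∀ y, ψ y ≤ cTransform φ y := by
    intro y
    refine le_iInf fun z => ?_
    have h : φ z ≤ ((dist z y ^ 2 / 2 : ℝ) : EReal) - ψ y := by
      rw [hψ z]; exact iInf_le _ y
    exact ereal_le_sub_comm h
  -- a minimizing sequence
  have hseq : ∀ n : ℕ, ∃ y : X,
      ((dist x y ^ 2 / 2 : ℝ) : EReal) - cTransform φ y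
        < ((a + 1 / (n + 1) : ℝ) : EReal) := by
    intro n
    have hlt : φ x < ((a + 1 / (n + 1) : ℝ) : EReal) := by
      rw [ha]
      refine EReal.coe_lt_coe_iff.mpr ?_
      have hp : (0 : ℝ) < 1 / (n + 1) := by positivity
      linarith
    have h2 : (⨅ y, ((dist x y ^ 2 / 2 : ℝ) : EReal) - ψ y)
        < ((a + 1 / (n + 1) : ℝ) : EReal) := by rw [← hψ x]; exact hlt
    obtain ⟨y, hy⟩ := iInf_lt_iff.mp h2
    exact ⟨y, lt_of_le_of_lt (ereal_sub_le_sub_const (hψle y) _) hy⟩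
  choose ys hys using hseq
  have hctop : ∀ y, cTransform φ y ≠ ⊤ := fun y => cTransform_ne_top φ hφ' y
  -- real values along the sequence
  have hbn : ∀ n : ℕ, ∃ b : ℝ, cTransform φ (ys n) = (b : EReal) ∧
      dist x (ys n) ^ 2 / 2 - b < a + 1 / (n + 1) := by
    intro n
    have h := hys n
    have hne_bot : cTransform φ (ys n) ≠ ⊥ := by
      intro hbb
      rw [hbb, EReal.coe_sub_bot] at h
      exact absurd h (by simp)
    obtain ⟨b, hb⟩ := ereal_exists_real hne_bot (hctop _)
    refine ⟨b, hb, ?_⟩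
    rw [hb, ← EReal.coe_sub] at h
    exact EReal.coe_lt_coe_iff.mp h
  choose bs hbs hblt using hbn
  -- the sequence lies in a compact ball
  have hmem : ∀ n : ℕ, ys n ∈ Metric.closedBall x C := by
    intro n
    have h1 : (1 : ℝ) / (n + 1) ≤ 1 := by
      rw [div_le_one (by positivity)]
      have := Nat.cast_nonneg (α := ℝ) n
      linarith
    have h2 : ((dist x (ys n) ^ 2 / 2 : ℝ) : EReal) - cTransform φ (ys n) ≤ φ x + 1 := by
      refine le_trans (le_of_lt (hys n)) ?_
      rw [ha]
      have : ((a : EReal) + 1) = ((a + 1 : ℝ) : EReal) := by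
        rw [EReal.coe_add, EReal.coe_one]
      rw [this]
      exact EReal.coe_le_coe_iff.mpr (by linarith)
    have := hC x (Set.mem_singleton x) (ys n) h2
    rw [Metric.mem_closedBall, dist_comm]
    exact this
  obtain ⟨y', hy'mem, sk, hskmono, hsktend⟩ :=
    (isCompact_closedBall x C).tendsto_subseq hmem
  -- limits
  have hysσ : Filter.Tendsto (fun m => ys (sk m)) Filter.atTop (nhds y') := hsktend
  have hdx : Filter.Tendsto (fun m => dist x (ys (sk m))) Filter.atTop (nhds (dist x y')) :=
    Filter.Tendsto.dist tendsto_const_nhds hysσ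
  have hinv : Filter.Tendsto (fun m => (1 : ℝ) / (sk m + 1)) Filter.atTop (nhds 0) := by
    have h1 : Filter.Tendsto (fun n : ℕ => (1 : ℝ) / (n + 1)) Filter.atTop (nhds 0) :=
      tendsto_one_div_add_atTop_nhds_zero_nat
    exact h1.comp hskmono.tendsto_atTop
  -- the lower bound on the c-transform at y'
  have hlow : ((dist x y' ^ 2 / 2 - a : ℝ) : EReal) ≤ cTransform φ y' := by
    refine le_iInf fun z => ?_
    rcases eq_or_ne (φ z) ⊥ with hz | hz
    · rw [hz, EReal.coe_sub_bot]; exact le_top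
    obtain ⟨az, haz⟩ := ereal_exists_real hz (htop z)
    rw [haz, ← EReal.coe_sub]
    refine EReal.coe_le_coe_iff.mpr ?_
    have hn : ∀ m : ℕ, dist x (ys (sk m)) ^ 2 / 2 - 1 / (sk m + 1) - a
        ≤ dist z (ys (sk m)) ^ 2 / 2 - az := by
      intro m
      have h1 : cTransform φ (ys (sk m))
          ≤ ((dist z (ys (sk m)) ^ 2 / 2 : ℝ) : EReal) - φ z :=
        iInf_le (fun z' => ((dist z' (ys (sk m)) ^ 2 / 2 : ℝ) : EReal) - φ z') z
      rw [hbs (sk m), haz, ← EReal.coe_sub] at h1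
      have h1' : bs (sk m) ≤ dist z (ys (sk m)) ^ 2 / 2 - az := EReal.coe_le_coe_iff.mp h1
      have h2 := hblt (sk m)
      linarith
    have ht1 : Filter.Tendsto
        (fun m => dist x (ys (sk m)) ^ 2 / 2 - 1 / (sk m + 1) - a) Filter.atTop
        (nhds (dist x y' ^ 2 / 2 - 0 - a)) :=
      (((hdx.pow 2).div_const 2).sub hinv).sub tendsto_const_nhds
    have hdz : Filter.Tendsto (fun m => dist z (ys (sk m))) Filter.atTop (nhds (dist z y')) :=
      Filter.Tendsto.dist tendsto_const_nhds hysσ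
    have ht2 : Filter.Tendsto (fun m => dist z (ys (sk m)) ^ 2 / 2 - az) Filter.atTop
        (nhds (dist z y' ^ 2 / 2 - az)) :=
      ((hdz.pow 2).div_const 2).sub tendsto_const_nhds
    have := le_of_tendsto_of_tendsto' ht1 ht2 hn
    linarith
  have hup : cTransform φ y' ≤ ((dist x y' ^ 2 / 2 - a : ℝ) : EReal) := by
    have h := iInf_le (fun z => ((dist z y' ^ 2 / 2 : ℝ) : EReal) - φ z) x
    rw [ha, ← EReal.coe_sub] at h
    exact h
  have heq : cTransform φ y' = ((dist x y' ^ 2 / 2 - a : ℝ) : EReal) :=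
    le_antisymm hup hlow
  refine ⟨y', ?_⟩
  show φ x + cTransform φ y' = ((dist x y' ^ 2 / 2 : ℝ) : EReal)
  rw [ha, heq, ← EReal.coe_add]
  norm_num


/-- **Lemma 3.3, second part**: for a `c`-concave function `φ` on a proper geodesic space and
a compact subset `K` of the interior of `{φ > -∞}`, the set `⋃_{x ∈ K} ∂ᶜφ(x)` is bounded;
moreover `∂ᶜφ(x)` is nonempty for every `x` in this interior. -/
theorem cSuperdiff_bounded_and_nonempty
    [ProperSpace X] (hX : IsGeodesicSpace X)
    (φ : X → EReal) (hφ : cConcave φ) :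
    (∀ Kc : Set X, IsCompact Kc → Kc ⊆ interior {x | φ x ≠ ⊥} →
        Bornology.IsBounded (⋃ x ∈ Kc, {y | (x, y) ∈ cSuperdiff φ}) ∧
        (Kc.Nonempty → (⋃ x ∈ Kc, {y | (x, y) ∈ cSuperdiff φ}).Nonempty)) ∧
      ∀ x ∈ interior {x | φ x ≠ ⊥}, {y | (x, y) ∈ cSuperdiff φ}.Nonempty := by
  have hne_pt : ∀ x ∈ interior {x | φ x ≠ ⊥}, {y | (x, y) ∈ cSuperdiff φ}.Nonempty :=
    fun x hx => superdiff_nonempty hX φ hφ hx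
  refine ⟨fun Kc hKc hKΩ => ?_, hne_pt⟩
  obtain ⟨C, Cpos, hC⟩ := key_bound hX φ hφ hKc hKΩ
  constructor
  · -- boundedness
    have hsub : (⋃ x ∈ Kc, {y | (x, y) ∈ cSuperdiff φ}) ⊆ Metric.cthickening C Kc := by
      intro y hy
      simp only [Set.mem_iUnion, exists_prop] at hy
      obtain ⟨x, hxK, hxy⟩ := hy
      have hmem : φ x + cTransform φ y = ((dist x y ^ 2 / 2 : ℝ) : EReal) := hxy
      obtain ⟨a, ha⟩ := ereal_exists_real (interior_subset (hKΩ hxK)) (hφ.2.1 x)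
      have hcb : cTransform φ y ≠ ⊥ := by
        intro h
        rw [h, ha] at hmem
        simp only [EReal.add_bot] at hmem
        exact absurd hmem.symm (by simp)
      have hct : cTransform φ y ≠ ⊤ := cTransform_ne_top φ hφ y
      obtain ⟨b, hb⟩ := ereal_exists_real hcb hct
      have hab : a + b = dist x y ^ 2 / 2 := by
        rw [ha, hb, ← EReal.coe_add] at hmem
        exact EReal.coe_eq_coe_iff.mp hmem
      have hhyp : ((dist x y ^ 2 / 2 : ℝ) : EReal) - cTransform φ y ≤ φ x + 1 := by
        rw [hb, ha, ← EReal.coe_sub]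
        have h1 : dist x y ^ 2 / 2 - b = a := by linarith
        rw [h1]
        have h2 : ((a : EReal) + 1) = ((a + 1 : ℝ) : EReal) := by
          rw [EReal.coe_add, EReal.coe_one]
        rw [h2]
        exact EReal.coe_le_coe_iff.mpr (by linarith)
      have hd := hC x hxK y hhyp
      exact Metric.mem_cthickening_of_dist_le y x C Kc hxK (by rwa [dist_comm])
    exact (hKc.isBounded.cthickening).subset hsub
  · rintro ⟨x0, hx0⟩
    obtain ⟨y0, hy0⟩ := hne_pt x0 (hKΩ hx0)
    exact ⟨y0, Set.mem_biUnion hx0 hy0⟩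

end
end

section
/- Let (X,d) be a complete, separable, proper, geodesic metric space, let mu, nu ∈ P2(X), let phi be a Kantorovich potential from mu to nu, let pi ∈ OptGeo(mu,nu) and let t ∈ [0,1]. Then t*phi is a Kantorovich potential from mu to (e_t)#pi; that is, t*phi is c-concave and supp((e_0,e_t)#pi) ⊂ ∂^c(t*phi). -/
open MeasureTheory Metric Set unitInterval ENNReal NNReal

noncomputable section

variable {X : Type*} [MetricSpace X]

variable [MeasurableSpace X]

/-! ### Auxiliary lemmas -/

section AuxEReal

lemma ereal_ne_top_ne_bot {v : EReal} (ht : v ≠ ⊤) (hb : v ≠ ⊥) : ∃ m : ℝ, v = (m : EReal) := by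
  induction v with
  | bot => exact absurd rfl hb
  | coe m => exact ⟨m, rfl⟩
  | top => exact absurd rfl ht

lemma ereal_le_coe_sub_comm {c : ℝ} {u v : EReal} :
    u ≤ (c : EReal) - v ↔ v ≤ (c : EReal) - u := by
  induction u <;> induction v <;>
    simp_all [EReal.coe_sub_bot, EReal.sub_top, EReal.top_sub_coe, ← EReal.coe_sub,
      EReal.coe_le_coe_iff] <;>
  · constructor <;> intro h <;> linarith

lemma ereal_coe_le_coe_add_iff {a b : ℝ} {v : EReal} :
    (a : EReal) ≤ (b : EReal) + v ↔ ((a - b : ℝ) : EReal) ≤ v := by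
  induction v with
  | bot =>
      rw [EReal.add_bot]
      simp only [le_bot_iff]
      exact ⟨fun h => absurd h (EReal.coe_ne_bot _), fun h => absurd h (EReal.coe_ne_bot _)⟩
  | coe m =>
      rw [← EReal.coe_add, EReal.coe_le_coe_iff, EReal.coe_le_coe_iff]
      constructor
      · intro h; linarith
      · intro h; linarith
  | top => simp [EReal.coe_add_top]

lemma ereal_add_coe_le_coe_iff {c d : ℝ} {v : EReal} :
    (c : EReal) + v ≤ (d : EReal) ↔ v ≤ ((d - c : ℝ) : EReal) := by
  induction v with
  | bot => simp [EReal.add_bot]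

  | coe m =>
      rw [← EReal.coe_add, EReal.coe_le_coe_iff, EReal.coe_le_coe_iff]
      constructor
      · intro h; linarith
      · intro h; linarith
  | top =>
      rw [EReal.coe_add_top]
      simp only [top_le_iff]
      exact ⟨fun h => absurd h (EReal.coe_ne_top _), fun h => absurd h (EReal.coe_ne_top _)⟩

lemma ereal_coe_add_eq {m c : ℝ} {v : EReal} (h : (m : EReal) + v = (c : EReal)) :
    v = ((c - m : ℝ) : EReal) := by
  induction v with
  | bot => rw [EReal.add_bot] at h; exact absurd h.symm (EReal.coe_ne_bot c)
  | coe r =>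
      rw [← EReal.coe_add] at h
      rw [EReal.coe_eq_coe_iff] at h ⊢
      linarith
  | top => rw [EReal.coe_add_top] at h; exact absurd h.symm (EReal.coe_ne_top c)

lemma ereal_mul_coe_le {s m : ℝ} (hs : 0 ≤ s) {u : EReal} (h : u ≤ (m : EReal)) :
    (s : EReal) * u ≤ ((s * m : ℝ) : EReal) := by
  induction u with
  | bot =>
      rcases hs.eq_or_lt with rfl | hs'
      · simp
      · rw [EReal.coe_mul_bot_of_pos hs']; exact bot_le
  | coe a =>
      rw [← EReal.coe_mul, EReal.coe_le_coe_iff]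
      exact mul_le_mul_of_nonneg_left (EReal.coe_le_coe_iff.1 h) hs
  | top => simp at h

lemma ereal_coe_sub_sub (a b : ℝ) (v : EReal) :
    ((a + b : ℝ) : EReal) - v - (b : EReal) = (a : EReal) - v := by
  induction v with
  | bot => rw [EReal.coe_sub_bot, EReal.top_sub_coe, EReal.coe_sub_bot]
  | coe m => norm_cast; ring
  | top => rw [EReal.sub_top, EReal.sub_top]; rfl

lemma ereal_coe_sub_sub' (a b : ℝ) (v : EReal) :
    (a : EReal) - (v - (b : EReal)) = ((a + b : ℝ) : EReal) - v := by
  induction v with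
  | bot =>
      have : (⊥ : EReal) - (b : EReal) = ⊥ := rfl
      rw [this, EReal.coe_sub_bot, EReal.coe_sub_bot]
  | coe m => norm_cast; ring
  | top =>
      have : (⊤ : EReal) - (b : EReal) = ⊤ := EReal.top_sub_coe b
      rw [this, EReal.sub_top, EReal.sub_top]

lemma ereal_smul_coe_sub {s c : ℝ} (hs : 0 < s) {v : EReal} (hv : v ≠ ⊤) :
    (s : EReal) * ((c : EReal) - v) = ((s * c : ℝ) : EReal) - (s : EReal) * v := by
  induction v with
  | bot => rw [EReal.coe_sub_bot, EReal.coe_mul_top_of_pos (by exact_mod_cast hs),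
      EReal.coe_mul_bot_of_pos hs, EReal.coe_sub_bot]
  | coe m => rw [← EReal.coe_sub, ← EReal.coe_mul, ← EReal.coe_mul, ← EReal.coe_sub,
      EReal.coe_eq_coe_iff]; ring
  | top => exact absurd rfl hv

lemma ereal_smul_ne_top {s : ℝ} (hs : 0 ≤ s) {v : EReal} (hv : v ≠ ⊤) :
    (s : EReal) * v ≠ ⊤ := by
  induction v with
  | bot =>
      rcases hs.eq_or_lt with rfl | hs'
      · simp
      · rw [EReal.coe_mul_bot_of_pos hs']; exact bot_ne_top
  | coe m => rw [← EReal.coe_mul]; exact EReal.coe_ne_top _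
  | top => exact absurd rfl hv

end AuxEReal

section AuxSupport

lemma isClosed_measSupport {Y : Type*} [TopologicalSpace Y] [MeasurableSpace Y]
    (μ : Measure Y) : IsClosed (measSupport μ) := by
  rw [← isOpen_compl_iff, isOpen_iff_mem_nhds]
  intro y hy
  simp only [measSupport, mem_compl_iff, mem_setOf_eq, not_forall] at hy
  obtain ⟨U, hU, hUpos⟩ := hy
  have hU0 : μ (interior U) = 0 :=
    le_antisymm ((measure_mono interior_subset).trans (not_lt.1 hUpos)) zero_le
  refine Filter.mem_of_superset (isOpen_interior.mem_nhds (mem_interior_iff_mem_nhds.2 hU)) ?_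
  intro z hz
  simp only [measSupport, mem_compl_iff, mem_setOf_eq, not_forall]
  exact ⟨interior U, isOpen_interior.mem_nhds hz, by simp [hU0]⟩

lemma measSupport_compl_null {Y : Type*} [TopologicalSpace Y] [MeasurableSpace Y]
    [SecondCountableTopology Y] (μ : Measure Y) :
    μ (measSupport μ)ᶜ = 0 := by
  obtain ⟨T, hTcnt, hTsub, hTeq⟩ := TopologicalSpace.isOpen_sUnion_countable
    {U : Set Y | IsOpen U ∧ μ U = 0} (fun U hU => hU.1)
  have hsub : (measSupport μ)ᶜ ⊆ ⋃₀ T := by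
    rw [hTeq]
    intro y hy
    simp only [measSupport, mem_compl_iff, mem_setOf_eq, not_forall] at hy
    obtain ⟨U, hU, hUpos⟩ := hy
    refine ⟨interior U, ⟨isOpen_interior, ?_⟩, mem_interior_iff_mem_nhds.2 hU⟩
    exact le_antisymm ((measure_mono interior_subset).trans (not_lt.1 hUpos)) zero_le
  refine le_antisymm ((measure_mono hsub).trans ?_) zero_le
  rw [(measure_sUnion_null_iff hTcnt).2 fun U hU => (hTsub hU).2]

end AuxSupport

section AuxUSC

variable {X : Type*} [MetricSpace X]

lemma isClosed_coe_le_of_usc {Z : Type*} [TopologicalSpace Z] {u : Z → ℝ} (hu : Continuous u)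
    {F : Z → EReal} (hF : UpperSemicontinuous F) :
    IsClosed {z | (u z : EReal) ≤ F z} := by
  rw [← isOpen_compl_iff, isOpen_iff_mem_nhds]
  intro z hz
  rw [mem_compl_iff, mem_setOf_eq, not_le] at hz
  obtain ⟨q, hq1, hq2⟩ := EReal.exists_between_coe_real hz
  have h1 : ∀ᶠ w in nhds z, F w < (q : EReal) := hF z _ hq1
  have h2 : ∀ᶠ w in nhds z, q < u w :=
    (hu.tendsto z).eventually (eventually_gt_nhds (EReal.coe_lt_coe_iff.1 hq2))
  filter_upwards [h1, h2] with w hw1 hw2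
  rw [mem_compl_iff, mem_setOf_eq, not_le]
  exact hw1.trans (EReal.coe_lt_coe_iff.2 hw2)

lemma usc_of_rep {ψ : X → EReal} (hψ : ∀ y, ψ y ≠ ⊤) :
    UpperSemicontinuous (fun x : X => ⨅ y, ((dist x y ^ 2 / 2 : ℝ) : EReal) - ψ y) := by
  apply upperSemicontinuous_iInf
  intro y
  rcases eq_or_ne (ψ y) ⊥ with hb | hb
  · have : (fun x : X => ((dist x y ^ 2 / 2 : ℝ) : EReal) - ψ y) = fun _ => (⊤ : EReal) := by
      funext x; rw [hb, EReal.coe_sub_bot]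
    rw [this]
    exact upperSemicontinuous_const
  · obtain ⟨m, hm⟩ := ereal_ne_top_ne_bot (hψ y) hb
    have : (fun x : X => ((dist x y ^ 2 / 2 : ℝ) : EReal) - ψ y) =
        fun x => ((dist x y ^ 2 / 2 - m : ℝ) : EReal) := by
      funext x; rw [hm, ← EReal.coe_sub]
    rw [this]
    exact (continuous_coe_real_ereal.comp
      ((((continuous_id.dist continuous_const).pow 2).div_const 2).sub
        continuous_const)).upperSemicontinuous

lemma cSuperdiff_eq_iInter {f : X → EReal} (hft : ∀ x, f x ≠ ⊤) {x₀ : X} (h₀ : f x₀ ≠ ⊥) :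
    cSuperdiff f = ⋂ x, {p : X × X |
      ((dist p.1 p.2 ^ 2 / 2 : ℝ) : EReal) + f x ≤ ((dist x p.2 ^ 2 / 2 : ℝ) : EReal) + f p.1} := by
  ext p
  simp only [cSuperdiff, mem_setOf_eq, mem_iInter]
  constructor
  · intro hp x
    have hne : f p.1 ≠ ⊥ := by
      intro hb
      rw [hb, EReal.bot_add] at hp
      exact (EReal.coe_ne_bot _) hp.symm
    obtain ⟨m, hm⟩ := ereal_ne_top_ne_bot (hft p.1) hne
    have hcT : cTransform f p.2 = ((dist p.1 p.2 ^ 2 / 2 - m : ℝ) : EReal) :=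
      ereal_coe_add_eq (by rw [← hm]; exact hp)
    have hle : ((dist p.1 p.2 ^ 2 / 2 - m : ℝ) : EReal) ≤
        ((dist x p.2 ^ 2 / 2 : ℝ) : EReal) - f x := by
      rw [← hcT]; exact iInf_le _ x
    have h2 : f x ≤ ((dist x p.2 ^ 2 / 2 : ℝ) : EReal) -
        ((dist p.1 p.2 ^ 2 / 2 - m : ℝ) : EReal) := ereal_le_coe_sub_comm.1 hle
    rw [← EReal.coe_sub] at h2
    rw [hm, ← EReal.coe_add]
    calc ((dist p.1 p.2 ^ 2 / 2 : ℝ) : EReal) + f x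
        ≤ ((dist p.1 p.2 ^ 2 / 2 : ℝ) : EReal) +
          ((dist x p.2 ^ 2 / 2 - (dist p.1 p.2 ^ 2 / 2 - m) : ℝ) : EReal) :=
          add_le_add le_rfl h2
      _ = ((dist x p.2 ^ 2 / 2 + m : ℝ) : EReal) := by
          rw [← EReal.coe_add, EReal.coe_eq_coe_iff]; ring
  · intro h
    have hne : f p.1 ≠ ⊥ := by
      intro hb
      have h₀' := h x₀
      rw [hb, EReal.add_bot, le_bot_iff] at h₀'
      have : f x₀ = ⊥ := by
        by_contra hfx
        obtain ⟨m, hm⟩ := ereal_ne_top_ne_bot (hft x₀) hfx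
        rw [hm, ← EReal.coe_add] at h₀'
        exact (EReal.coe_ne_bot _) h₀'
      exact h₀ this
    obtain ⟨m, hm⟩ := ereal_ne_top_ne_bot (hft p.1) hne
    have hub : ∀ x, ((dist p.1 p.2 ^ 2 / 2 - m : ℝ) : EReal) ≤
        ((dist x p.2 ^ 2 / 2 : ℝ) : EReal) - f x := by
      intro x
      rw [← ereal_le_coe_sub_comm]
      have hx := h x
      rw [hm, ← EReal.coe_add, ereal_add_coe_le_coe_iff] at hx
      refine hx.trans (le_of_eq ?_)
      rw [← EReal.coe_sub, EReal.coe_eq_coe_iff]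
      ring
    have hlb : cTransform f p.2 ≤ ((dist p.1 p.2 ^ 2 / 2 - m : ℝ) : EReal) := by
      have h1 : cTransform f p.2 ≤ ((dist p.1 p.2 ^ 2 / 2 : ℝ) : EReal) - f p.1 :=
        iInf_le _ p.1
      rwa [hm, ← EReal.coe_sub] at h1
    have hcT : cTransform f p.2 = ((dist p.1 p.2 ^ 2 / 2 - m : ℝ) : EReal) :=
      le_antisymm hlb (le_iInf hub)
    rw [hm, hcT, ← EReal.coe_add, EReal.coe_eq_coe_iff]
    ring

lemma isClosed_cSuperdiff {f : X → EReal} (hft : ∀ x, f x ≠ ⊤) {x₀ : X} (h₀ : f x₀ ≠ ⊥)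
    (hf : UpperSemicontinuous f) : IsClosed (cSuperdiff f) := by
  rw [cSuperdiff_eq_iInter hft h₀]
  apply isClosed_iInter
  intro x
  rcases eq_or_ne (f x) ⊥ with hb | hb
  · have : {p : X × X | ((dist p.1 p.2 ^ 2 / 2 : ℝ) : EReal) + f x ≤
        ((dist x p.2 ^ 2 / 2 : ℝ) : EReal) + f p.1} = univ := by
      refine eq_univ_of_forall fun p => ?_
      simp only [mem_setOf_eq, hb, EReal.add_bot]
      exact bot_le
    rw [this]; exact isClosed_univ
  · obtain ⟨m, hm⟩ := ereal_ne_top_ne_bot (hft x) hb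
    have : {p : X × X | ((dist p.1 p.2 ^ 2 / 2 : ℝ) : EReal) + f x ≤
        ((dist x p.2 ^ 2 / 2 : ℝ) : EReal) + f p.1} =
        {p : X × X | ((dist p.1 p.2 ^ 2 / 2 + m - dist x p.2 ^ 2 / 2 : ℝ) : EReal) ≤ f p.1} := by
      ext p
      rw [mem_setOf_eq, mem_setOf_eq, hm, ← EReal.coe_add]
      exact ereal_coe_le_coe_add_iff
    rw [this]
    exact isClosed_coe_le_of_usc
      (((((continuous_fst.dist continuous_snd).pow 2).div_const 2).add continuous_const).sub
        (((continuous_const.dist continuous_snd).pow 2).div_const 2))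
      (hf.comp continuous_fst)

end AuxUSC

section AuxMain

variable {X : Type*} [MetricSpace X]

lemma geo_dist_eval (γ : Geo X) (a b : unitInterval) :
    dist (eval a γ) (eval b γ) = |(a : ℝ) - (b : ℝ)| * dist (eval 0 γ) (eval 1 γ) :=
  γ.2 a b

lemma geo_mem_cSuperdiff_smul {φ : X → EReal} (hφt : ∀ x, φ x ≠ ⊤) (t : unitInterval)
    (γ : Geo X) (hγ : (eval 0 γ, eval 1 γ) ∈ cSuperdiff φ) :
    (eval 0 γ, eval t γ) ∈ cSuperdiff (fun x => ((t : ℝ) : EReal) * φ x) := by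
  have hs0 : (0 : ℝ) ≤ (t : ℝ) := t.2.1
  have hs1 : (t : ℝ) ≤ 1 := t.2.2
  set s : ℝ := (t : ℝ) with hsdef
  set x₀ := eval 0 γ with hx₀
  set x₁ := eval 1 γ with hx₁
  set xt := eval t γ with hxt
  set D := dist x₀ x₁ with hD
  have hd0t : dist x₀ xt = s * D := by
    have h := geo_dist_eval γ 0 t
    rw [← hx₀, ← hxt, ← hx₁, ← hD] at h
    rw [h, show ((0 : unitInterval) : ℝ) = 0 from rfl, zero_sub, abs_neg, abs_of_nonneg hs0]
  have hdt1 : dist xt x₁ = (1 - s) * D := by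
    have h := geo_dist_eval γ t 1
    rw [← hxt, ← hx₀, ← hx₁, ← hD] at h
    rw [h, show ((1 : unitInterval) : ℝ) = 1 from rfl,
      abs_of_nonpos (by linarith : s - 1 ≤ 0), neg_sub]
  have hmem : φ x₀ + cTransform φ x₁ = ((dist x₀ x₁ ^ 2 / 2 : ℝ) : EReal) := hγ
  rw [← hD] at hmem
  have hne : φ x₀ ≠ ⊥ := by
    intro hb
    rw [hb, EReal.bot_add] at hmem
    exact (EReal.coe_ne_bot _) hmem.symm
  obtain ⟨u₀, hu₀⟩ := ereal_ne_top_ne_bot (hφt x₀) hne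
  have hv : cTransform φ x₁ = ((D ^ 2 / 2 - u₀ : ℝ) : EReal) :=
    ereal_coe_add_eq (by rw [← hu₀]; exact hmem)
  have hφle : ∀ x, φ x ≤ ((dist x x₁ ^ 2 / 2 - (D ^ 2 / 2 - u₀) : ℝ) : EReal) := by
    intro x
    have h1 : ((D ^ 2 / 2 - u₀ : ℝ) : EReal) ≤ ((dist x x₁ ^ 2 / 2 : ℝ) : EReal) - φ x := by
      rw [← hv]; exact iInf_le _ x
    have h2 := ereal_le_coe_sub_comm.1 h1
    rwa [← EReal.coe_sub] at h2
  have hkey : ∀ x, ((dist x₀ xt ^ 2 / 2 - s * u₀ : ℝ) : EReal) ≤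
      ((dist x xt ^ 2 / 2 : ℝ) : EReal) - (s : EReal) * φ x := by
    intro x
    rw [← ereal_le_coe_sub_comm, ← EReal.coe_sub]
    refine (ereal_mul_coe_le hs0 (hφle x)).trans ?_
    rw [EReal.coe_le_coe_iff]
    have htri : dist x x₁ ≤ dist x xt + dist xt x₁ := dist_triangle _ _ _
    rw [hdt1] at htri
    have hDnn : (0 : ℝ) ≤ D := dist_nonneg
    have hann : (0 : ℝ) ≤ dist x xt := dist_nonneg
    have hsq : dist x x₁ ^ 2 ≤ (dist x xt + (1 - s) * D) ^ 2 :=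
      pow_le_pow_left₀ dist_nonneg htri 2
    rw [hd0t]
    nlinarith [mul_le_mul_of_nonneg_left hsq hs0,
      mul_nonneg (sub_nonneg.2 hs1) (sq_nonneg (dist x xt - s * D)),
      sq_nonneg (dist x xt - s * D)]
  have hcT : cTransform (fun x => (s : EReal) * φ x) xt =
      ((dist x₀ xt ^ 2 / 2 - s * u₀ : ℝ) : EReal) := by
    refine le_antisymm ?_ (le_iInf hkey)
    have h1 : cTransform (fun x => (s : EReal) * φ x) xt ≤
        ((dist x₀ xt ^ 2 / 2 : ℝ) : EReal) - (s : EReal) * φ x₀ := iInf_le _ x₀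
    rwa [hu₀, ← EReal.coe_mul, ← EReal.coe_sub] at h1
  show (s : EReal) * φ x₀ + cTransform (fun x => (s : EReal) * φ x) xt =
    ((dist x₀ xt ^ 2 / 2 : ℝ) : EReal)
  rw [hu₀, ← EReal.coe_mul, hcT, ← EReal.coe_add, EReal.coe_eq_coe_iff]
  ring

lemma cConcave_zero_smul {φ : X → EReal} (x : X) :
    cConcave (fun x => ((0 : ℝ) : EReal) * φ x) := by
  simp only [EReal.coe_zero, zero_mul]
  refine ⟨⟨x, by simp⟩, fun _ => by simp, fun _ => (0 : EReal), fun _ => by simp, fun x' => ?_⟩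
  refine le_antisymm (le_iInf fun y => ?_) (iInf_le_of_le x' ?_)
  · rw [sub_eq_add_neg, neg_zero, add_zero]
    exact EReal.coe_nonneg.2 (by positivity)
  · rw [sub_eq_add_neg, neg_zero, add_zero]
    simp [dist_self]

lemma cConcave_one_smul {φ : X → EReal} (hφ : cConcave φ) :
    cConcave (fun x => ((1 : ℝ) : EReal) * φ x) := by
  simpa only [EReal.coe_one, one_mul] using hφ

lemma cConcave_smul (hX : IsGeodesicSpace X) {φ : X → EReal} (hφ : cConcave φ)
    {s : ℝ} (hs0 : 0 < s) (hs1 : s < 1) :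
    cConcave (fun x => (s : EReal) * φ x) := by
  obtain ⟨⟨x₁, hx₁⟩, hφt, ψ, hψt, hrep⟩ := hφ
  have h1s : 0 < 1 - s := by linarith
  set r : ℝ := s / (1 - s) with hr
  have hrs : r * (1 - s) = s := div_mul_cancel₀ s h1s.ne'
  set ψ' : X → EReal :=
    fun z => ⨆ y, ((s : EReal) * ψ y - ((r * dist z y ^ 2 / 2 : ℝ) : EReal)) with hψ'
  have key : ∀ x, (s : EReal) * φ x = ⨅ z, ((dist x z ^ 2 / 2 : ℝ) : EReal) - ψ' z := by
    intro x
    have hge : ∀ z, (s : EReal) * φ x ≤ ((dist x z ^ 2 / 2 : ℝ) : EReal) - ψ' z := by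
      intro z
      rw [ereal_le_coe_sub_comm]
      simp only [hψ']
      refine iSup_le fun y => ?_
      have hb : (s : EReal) * φ x ≤
          ((dist x z ^ 2 / 2 + r * dist z y ^ 2 / 2 : ℝ) : EReal) - (s : EReal) * ψ y := by
        rcases eq_or_ne (ψ y) ⊥ with hbb | hbb
        · rw [hbb, EReal.coe_mul_bot_of_pos hs0, EReal.coe_sub_bot]
          exact le_top
        · obtain ⟨m, hm⟩ := ereal_ne_top_ne_bot (hψt y) hbb
          have hφx : φ x ≤ ((dist x y ^ 2 / 2 - m : ℝ) : EReal) := by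
            rw [hrep x]
            refine iInf_le_of_le y (le_of_eq ?_)
            rw [hm, ← EReal.coe_sub]
          refine (ereal_mul_coe_le hs0.le hφx).trans ?_
          rw [hm, ← EReal.coe_mul, ← EReal.coe_sub, EReal.coe_le_coe_iff]
          have htri : dist x y ≤ dist x z + dist z y := dist_triangle _ _ _
          have hmain : s * dist x y ^ 2 - dist x z ^ 2 ≤ r * dist z y ^ 2 := by
            rw [hr, div_mul_eq_mul_div, le_div_iff₀ h1s]
            nlinarith [sq_nonneg ((1 - s) * dist x z - s * dist z y),
              mul_le_mul_of_nonneg_left (pow_le_pow_left₀ dist_nonneg htri 2)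
                (mul_nonneg hs0.le h1s.le),
              mul_nonneg (mul_nonneg hs0.le h1s.le) (sq_nonneg (dist x z + dist z y))]
          linarith
      have h1 := ereal_le_coe_sub_comm.1 hb
      refine (EReal.sub_le_sub h1 le_rfl).trans (le_of_eq ?_)
      exact ereal_coe_sub_sub (dist x z ^ 2 / 2) (r * dist z y ^ 2 / 2) ((s : EReal) * φ x)
    have hle : (⨅ z, ((dist x z ^ 2 / 2 : ℝ) : EReal) - ψ' z) ≤ (s : EReal) * φ x := by
      have step1 : ∀ y, (⨅ z, ((dist x z ^ 2 / 2 : ℝ) : EReal) - ψ' z) ≤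
          (s : EReal) * (((dist x y ^ 2 / 2 : ℝ) : EReal) - ψ y) := by
        intro y
        obtain ⟨γ, hγ0, hγ1⟩ := hX x y
        set z := eval ⟨s, hs0.le, hs1.le⟩ γ with hz
        have hxz : dist x z = s * dist x y := by
          have h := geo_dist_eval γ 0 ⟨s, hs0.le, hs1.le⟩
          rw [hγ0, hγ1, ← hz] at h
          rw [h, show ((0 : unitInterval) : ℝ) = 0 from rfl,
            show ((⟨s, hs0.le, hs1.le⟩ : unitInterval) : ℝ) = s from rfl,
            zero_sub, abs_neg, abs_of_nonneg hs0.le]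
        have hzy : dist z y = (1 - s) * dist x y := by
          have h := geo_dist_eval γ ⟨s, hs0.le, hs1.le⟩ 1
          rw [hγ0, hγ1, ← hz] at h
          rw [h, show ((1 : unitInterval) : ℝ) = 1 from rfl,
            show ((⟨s, hs0.le, hs1.le⟩ : unitInterval) : ℝ) = s from rfl,
            abs_of_nonpos (by linarith : s - 1 ≤ 0), neg_sub]
        have hreal : dist x z ^ 2 / 2 + r * dist z y ^ 2 / 2 = s * (dist x y ^ 2 / 2) := by
          rw [hxz, hzy, hr]
          have hne : (1 : ℝ) - s ≠ 0 := h1s.ne'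
          field_simp
          ring
        refine (iInf_le _ z).trans ?_
        have h2 : ((s : EReal) * ψ y - ((r * dist z y ^ 2 / 2 : ℝ) : EReal)) ≤ ψ' z := by
          simp only [hψ']
          exact le_iSup (fun y => ((s : EReal) * ψ y - ((r * dist z y ^ 2 / 2 : ℝ) : EReal))) y
        refine (EReal.sub_le_sub le_rfl h2).trans (le_of_eq ?_)
        rw [ereal_coe_sub_sub' (dist x z ^ 2 / 2) (r * dist z y ^ 2 / 2) ((s : EReal) * ψ y),
          hreal, ereal_smul_coe_sub hs0 (hψt y)]
      have step2 : ((s⁻¹ : ℝ) : EReal) * (⨅ z, ((dist x z ^ 2 / 2 : ℝ) : EReal) - ψ' z) ≤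
          φ x := by
        rw [hrep x]
        refine le_iInf fun y => ?_
        have h := mul_le_mul_of_nonneg_left (step1 y)
          (EReal.coe_nonneg.2 (by positivity : (0 : ℝ) ≤ s⁻¹))
        rwa [← mul_assoc, ← EReal.coe_mul, inv_mul_cancel₀ hs0.ne', EReal.coe_one,
          one_mul] at h
      have h := mul_le_mul_of_nonneg_left step2 (EReal.coe_nonneg.2 hs0.le)
      rwa [← mul_assoc, ← EReal.coe_mul, mul_inv_cancel₀ hs0.ne', EReal.coe_one,
        one_mul] at h
    exact le_antisymm (le_iInf hge) hle
  have hψ't : ∀ z, ψ' z ≠ ⊤ := by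
    intro z htop
    obtain ⟨m, hm⟩ := ereal_ne_top_ne_bot (hφt x₁) hx₁
    have h3 : (⨅ z', ((dist x₁ z' ^ 2 / 2 : ℝ) : EReal) - ψ' z') ≤
        ((dist x₁ z ^ 2 / 2 : ℝ) : EReal) - ψ' z := iInf_le _ z
    rw [← key x₁, htop, EReal.sub_top, le_bot_iff, hm, ← EReal.coe_mul] at h3
    exact (EReal.coe_ne_bot _) h3
  refine ⟨⟨x₁, ?_⟩, fun x => ereal_smul_ne_top hs0.le (hφt x), ψ', hψ't, key⟩
  obtain ⟨m, hm⟩ := ereal_ne_top_ne_bot (hφt x₁) hx₁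
  show (s : EReal) * φ x₁ ≠ ⊥
  rw [hm, ← EReal.coe_mul]
  exact EReal.coe_ne_bot _

end AuxMain

/-- If `φ` is a Kantorovich potential from `μ` to `ν` and `π ∈ OptGeo(μ,ν)`, then for every
`t ∈ [0,1]` the function `t·φ` is a Kantorovich potential from `μ` to `(e_t)#π`: it is
`c`-concave and `supp((e₀,e_t)#π) ⊆ ∂ᶜ(t·φ)`. -/
theorem rescaled_kantorovich_potential
    [CompleteSpace X] [TopologicalSpace.SeparableSpace X] [ProperSpace X] [BorelSpace X]
    (hX : IsGeodesicSpace X)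
    (μ ν : Measure X) (hμp : IsProbabilityMeasure μ) (hνp : IsProbabilityMeasure ν)
    (hμ2 : HasFiniteSecondMoment μ) (hν2 : HasFiniteSecondMoment ν)
    (φ : X → EReal) (hφ : IsKantorovichPotential μ ν φ)
    (π : Measure (Geo X)) (hπ : IsOptGeo μ ν π) (t : unitInterval) :
    cConcave (fun x => ((t : ℝ) : EReal) * φ x) ∧
      measSupport (π.map fun γ => (eval 0 γ, eval t γ)) ⊆
        cSuperdiff (fun x => ((t : ℝ) : EReal) * φ x) := by
  obtain ⟨hconc, hsupp⟩ := hφ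
  have hφt : ∀ x, φ x ≠ ⊤ := hconc.2.1
  have hs0 : (0 : ℝ) ≤ (t : ℝ) := t.2.1
  have hs1 : (t : ℝ) ≤ 1 := t.2.2
  have hconc' : cConcave (fun x => ((t : ℝ) : EReal) * φ x) := by
    rcases hs0.eq_or_lt with h0 | h0
    · obtain ⟨x₁, -⟩ := hconc.1
      have h0' : (t : ℝ) = 0 := h0.symm
      have heq : (fun x => ((t : ℝ) : EReal) * φ x) = fun x => ((0 : ℝ) : EReal) * φ x := by
        funext x; rw [h0']
      rw [heq]
      exact cConcave_zero_smul x₁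
    rcases hs1.eq_or_lt with h1 | h1
    · have heq : (fun x => ((t : ℝ) : EReal) * φ x) = fun x => ((1 : ℝ) : EReal) * φ x := by
        funext x; rw [h1]
      rw [heq]
      exact cConcave_one_smul hconc
    · exact cConcave_smul hX hconc h0 h1
  refine ⟨hconc', ?_⟩
  haveI : SecondCountableTopology X := UniformSpace.secondCountable_of_separable X
  have hcont : ∀ u : unitInterval, Continuous (eval u : Geo X → X) := by
    intro u
    refine (LipschitzWith.of_dist_le_mul (K := 1) fun γ γ' => ?_).continuous
    rw [NNReal.coe_one, one_mul]
    calc dist (eval u γ) (eval u γ') ≤ dist γ.1 γ'.1 := ContinuousMap.dist_apply_le_dist u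
      _ = dist γ γ' := (Subtype.dist_eq γ γ').symm
  have hmeas01 : Measurable (fun γ : Geo X => (eval 0 γ, eval 1 γ)) :=
    ((hcont 0).prodMk (hcont 1)).measurable
  have hmeast : Measurable (fun γ : Geo X => (eval 0 γ, eval t γ)) :=
    ((hcont 0).prodMk (hcont t)).measurable
  set lam := π.map (fun γ => (eval 0 γ, eval 1 γ)) with hlam
  have hnull : π ((fun γ : Geo X => (eval 0 γ, eval 1 γ)) ⁻¹' (measSupport lam)ᶜ) = 0 := by
    rw [← Measure.map_apply hmeas01 (isClosed_measSupport lam).measurableSet.compl]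
    exact measSupport_compl_null lam
  have hπnull :
      π {γ : Geo X | (eval 0 γ, eval t γ) ∉ cSuperdiff (fun x => ((t : ℝ) : EReal) * φ x)} = 0 := by
    refine measure_mono_null ?_ hnull
    intro γ hγ
    simp only [mem_setOf_eq] at hγ
    simp only [mem_preimage, mem_compl_iff]
    intro hmem
    exact hγ (geo_mem_cSuperdiff_smul hφt t γ (hsupp π hπ hmem))
  obtain ⟨x₀, hx₀⟩ := hconc'.1
  have husc : UpperSemicontinuous (fun x => ((t : ℝ) : EReal) * φ x) := by
    obtain ⟨-, -, ψ', hψ't, hrep⟩ := hconc'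
    have heq : (fun x => ((t : ℝ) : EReal) * φ x) =
        fun x => ⨅ y, ((dist x y ^ 2 / 2 : ℝ) : EReal) - ψ' y := funext hrep
    rw [heq]
    exact usc_of_rep hψ't
  have hclosed : IsClosed (cSuperdiff (fun x => ((t : ℝ) : EReal) * φ x)) :=
    isClosed_cSuperdiff hconc'.2.1 hx₀ husc
  intro p hp
  by_contra hpn
  have hU : (cSuperdiff (fun x => ((t : ℝ) : EReal) * φ x))ᶜ ∈ nhds p :=
    hclosed.isOpen_compl.mem_nhds hpn
  have hpos := hp _ hU
  rw [Measure.map_apply hmeast hclosed.measurableSet.compl] at hpos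
  exact hpos.ne' hπnull

end
end
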